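/- arXiv:1301.5118 — 12 statements merged into one kernel-verified Lean document; each statement's English description precedes it below -/
import Mathlib

section
/- For each integer k ≥ 3, the set A = {n ∈ ℕ⁺ : n is not divisible by k} is (k−1)^∞-summable but is not k-summable. -/
/-- A sequence `x` satisfies uniqueness of finite sums on the index set `I`. -/
def UFSOn (x : ℕ → ℕ) (I : Finset ℕ) : Prop :=
  ∀ F H : Finset ℕ, F ⊆ I → H ⊆ I → F.Nonempty → H.Nonempty →
    ∑ t ∈ F, x t = ∑ t ∈ H, x t → F = H

/-- `A` is `k`-summable: there is a `k`-term sequence of positive integers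
(indexed by `{1,…,k}`) satisfying uniqueness of finite sums, all of whose
finite sums lie in `A`. -/
def KSummable (A : Set ℕ) (k : ℕ) : Prop :=
  ∃ x : ℕ → ℕ, (∀ t ∈ Finset.Icc 1 k, 0 < x t) ∧ UFSOn x (Finset.Icc 1 k) ∧
    ∀ F ⊆ Finset.Icc 1 k, F.Nonempty → ∑ t ∈ F, x t ∈ A

/-- An infinite sequence satisfies uniqueness of finite sums. -/
def UFSInf (x : ℕ → ℕ) : Prop :=
  ∀ F H : Finset ℕ, F.Nonempty → H.Nonempty →
    ∑ t ∈ F, x t = ∑ t ∈ H, x t → F = H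

/-- `A` is `k^∞`-summable: there is an infinite sequence of positive integers
satisfying uniqueness of finite sums such that all sums of at most `k`
distinct terms lie in `A`. -/
def KInfSummable (A : Set ℕ) (k : ℕ) : Prop :=
  ∃ x : ℕ → ℕ, (∀ t, 0 < x t) ∧ UFSInf x ∧
    ∀ F : Finset ℕ, F.Nonempty → F.card ≤ k → ∑ t ∈ F, x t ∈ A

/-- Superincreasing sequences have injective subset sums. -/
lemma ufs_of_superincreasing (x : ℕ → ℕ)
    (hx : ∀ n, ∑ t ∈ Finset.range n, x t < x n) :
    ∀ F H : Finset ℕ, ∑ t ∈ F, x t = ∑ t ∈ H, x t → F = H := by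
  have key : ∀ n (F H : Finset ℕ), F ⊆ Finset.range n → H ⊆ Finset.range n →
      ∑ t ∈ F, x t = ∑ t ∈ H, x t → F = H := by
    intro n
    induction n with
    | zero =>
      intro F H hF hH _
      simp only [Finset.range_zero, Finset.subset_empty] at hF hH
      rw [hF, hH]
    | succ n ih =>
      intro F H hF hH hsum
      have hsub : ∀ G : Finset ℕ, G ⊆ Finset.range (n+1) → n ∉ G → G ⊆ Finset.range n := by
        intro G hG hnG t ht
        have := hG ht
        rw [Finset.mem_range] at this ⊢
        rcases Nat.lt_succ_iff_lt_or_eq.mp this with h | h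
        · exact h
        · exact absurd (h ▸ ht) hnG
      by_cases hnF : n ∈ F <;> by_cases hnH : n ∈ H
      · -- both contain n
        have hF' : F.erase n ⊆ Finset.range n :=
          hsub _ ((Finset.erase_subset _ _).trans hF) (Finset.notMem_erase _ _)
        have hH' : H.erase n ⊆ Finset.range n :=
          hsub _ ((Finset.erase_subset _ _).trans hH) (Finset.notMem_erase _ _)
        have h1 : x n + ∑ t ∈ F.erase n, x t = x n + ∑ t ∈ H.erase n, x t := by
          rw [Finset.add_sum_erase _ _ hnF, Finset.add_sum_erase _ _ hnH]; exact hsum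
        have := ih _ _ hF' hH' (Nat.add_left_cancel h1)
        have : insert n (F.erase n) = insert n (H.erase n) := by rw [this]
        rwa [Finset.insert_erase hnF, Finset.insert_erase hnH] at this
      · -- n ∈ F, n ∉ H : contradiction
        exfalso
        have h1 : x n ≤ ∑ t ∈ F, x t :=
          Finset.single_le_sum (fun i _ => Nat.zero_le _) hnF
        have h2 : ∑ t ∈ H, x t ≤ ∑ t ∈ Finset.range n, x t :=
          Finset.sum_le_sum_of_subset (hsub _ hH hnH)
        have h3 := hx n
        omega
      · -- n ∉ F, n ∈ H : contradiction
        exfalso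
        have h1 : x n ≤ ∑ t ∈ H, x t :=
          Finset.single_le_sum (fun i _ => Nat.zero_le _) hnH
        have h2 : ∑ t ∈ F, x t ≤ ∑ t ∈ Finset.range n, x t :=
          Finset.sum_le_sum_of_subset (hsub _ hF hnF)
        have h3 := hx n
        omega
      · exact ih _ _ (hsub _ hF hnF) (hsub _ hH hnH) hsum
  intro F H hsum
  obtain ⟨n, hFn, hHn⟩ : ∃ n, F ⊆ Finset.range n ∧ H ⊆ Finset.range n := by
    refine ⟨(F ∪ H).sup id + 1, ?_, ?_⟩ <;> intro t ht <;>
      rw [Finset.mem_range, Nat.lt_succ_iff] <;>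
      exact Finset.le_sup (f := id) (by simp [ht])
  exact key n F H hFn hHn hsum

/-- For `k ≥ 3`, the set of positive integers not divisible by `k` is
`(k-1)^∞`-summable but not `k`-summable. -/
theorem not_div_k_summability (k : ℕ) (hk : 3 ≤ k) :
    KInfSummable {n : ℕ | 0 < n ∧ ¬ k ∣ n} (k - 1) ∧
    ¬ KSummable {n : ℕ | 0 < n ∧ ¬ k ∣ n} k := by
  constructor
  · -- (k-1)^∞-summable, witness x t = k^(t+1) + 1
    refine ⟨fun t => k ^ (t + 1) + 1, fun t => by positivity, ?_, ?_⟩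
    · intro F H _ _ hsum
      apply ufs_of_superincreasing _ _ _ _ hsum
      intro n
      induction n with
      | zero => simp
      | succ n ih =>
        rw [Finset.sum_range_succ]
        have h1 : k ^ (n + 1 + 1) = k * k ^ (n + 1) := by ring
        have h2 : 3 * k ^ (n + 1) ≤ k * k ^ (n + 1) :=
          Nat.mul_le_mul_right _ hk
        have h3 : 1 ≤ k ^ (n + 1) := Nat.one_le_pow _ _ (by omega)
        omega
    · intro F hne hcard
      have hsplit : ∑ t ∈ F, (k ^ (t + 1) + 1) = (∑ t ∈ F, k ^ (t + 1)) + F.card := by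
        rw [Finset.sum_add_distrib, Finset.sum_const, smul_eq_mul, mul_one]
      have hdvd : k ∣ ∑ t ∈ F, k ^ (t + 1) :=
        Finset.dvd_sum fun t _ => dvd_pow_self k (Nat.succ_ne_zero t)
      have hcpos : 0 < F.card := Finset.card_pos.mpr hne
      constructor
      · rw [hsplit]; omega
      · rw [hsplit]
        intro h
        have : k ∣ F.card := (Nat.dvd_add_right hdvd).mp h
        have := Nat.le_of_dvd hcpos this
        omega
  · -- not k-summable
    rintro ⟨x, _, _, hmem⟩
    set s : ℕ → ℕ := fun j => ∑ t ∈ Finset.Ioc 0 j, x t with hs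
    have hsA : ∀ j ∈ Finset.Icc 1 k, ¬ k ∣ s j := by
      intro j hj
      rw [Finset.mem_Icc] at hj
      have : Finset.Ioc 0 j ⊆ Finset.Icc 1 k := by
        intro t ht
        rw [Finset.mem_Ioc] at ht
        rw [Finset.mem_Icc]
        omega
      exact (hmem _ this ⟨j, by rw [Finset.mem_Ioc]; omega⟩).2
    -- pigeonhole: two partial sums agree mod k
    have hmaps : ∀ j ∈ Finset.Icc 1 k, s j % k ∈ Finset.Ioo 0 k := by
      intro j hj
      rw [Finset.mem_Ioo]
      refine ⟨?_, Nat.mod_lt _ (by omega)⟩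
      rcases Nat.eq_zero_or_pos (s j % k) with h | h
      · exact absurd (Nat.dvd_of_mod_eq_zero h) (hsA j hj)
      · exact h
    have hcard : (Finset.Ioo 0 k).card < (Finset.Icc 1 k).card := by
      rw [Nat.card_Ioo, Nat.card_Icc]; omega
    obtain ⟨i, hi, j, hj, hne, heq⟩ :=
      Finset.exists_ne_map_eq_of_card_lt_of_maps_to hcard hmaps
    rw [Finset.mem_Icc] at hi hj
    -- wlog i < j
    wlog hij : i < j generalizing i j
    · exact this j hj i hi hne.symm heq.symm (by omega)
    have hdecomp : s i + ∑ t ∈ Finset.Ioc i j, x t = s j := by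
      simpa [hs] using Finset.sum_Ioc_consecutive x (Nat.zero_le i) (le_of_lt hij)
    have hsub : Finset.Ioc i j ⊆ Finset.Icc 1 k := by
      intro t ht
      rw [Finset.mem_Ioc] at ht
      rw [Finset.mem_Icc]
      omega
    have hS := (hmem _ hsub ⟨j, by rw [Finset.mem_Ioc]; omega⟩).2
    apply hS
    have hmod : (s i + ∑ t ∈ Finset.Ioc i j, x t) % k = (s i + 0) % k := by
      rw [hdecomp, Nat.add_zero]; exact heq.symm
    have := Nat.ModEq.add_left_cancel' (s i) (hmod.symm : (s i + 0) % k = _)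
    exact (Nat.modEq_zero_iff_dvd).mp this.symm
end

section
/- (Infinite Finite Unions Theorem) Let r be a positive integer. If the collection Fin(ℕ⁺) of all nonempty finite subsets of the positive integers is partitioned into r cells F_1 ∪ … ∪ F_r, then there exist i ∈ {1,…,r} and a sequence ⟨F_t⟩_{t=1}^∞ of nonempty finite subsets of ℕ⁺ such that max F_t < min F_{t+1} for every t, and for every nonempty finite set H of positive integers, the union ⋃_{t∈H} F_t belongs to F_i. -/
open Hindman Finset

/-- predicate preserved under addition and true on a stream is true on all finite sums -/
private lemma FS_forall {M : Type*} [AddSemigroup M] (P : M → Prop)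
    (hadd : ∀ x y, P x → P y → P (x + y)) :
    ∀ {a : Stream' M} {m : M}, m ∈ Hindman.FS a → (∀ n, P (a.get n)) → P m := by
  intro a m hm
  induction hm with
  | head' c => intro h; exact h 0
  | tail' c m h ih => intro hc; exact ih (fun n => hc (n + 1))
  | cons' c m h ih => intro hc; exact hadd _ _ (hc 0) (ih fun n => hc (n + 1))

private lemma supp_nonempty {n : ℕ} (hn : 0 < n) : n.bitIndices.toFinset.Nonempty := by
  rw [Finset.nonempty_iff_ne_empty]
  intro h
  have h2 := Finset.twoPowSum_toFinset_bitIndices n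
  rw [h, Finset.sum_empty] at h2
  omega

private lemma supp_pos {n : ℕ} (hn : 2 ∣ n) : ∀ a ∈ n.bitIndices.toFinset, 0 < a := by
  intro a ha
  rcases Nat.eq_zero_or_pos a with rfl | h
  case inr => exact h
  case inl =>
    exfalso
    have hsum := Finset.twoPowSum_toFinset_bitIndices n
    set s := n.bitIndices.toFinset with hs
    have h1 : n = 2 ^ 0 + ∑ i ∈ s.erase 0, 2 ^ i := by
      rw [← Finset.add_sum_erase _ _ ha] at hsum
      omega
    have heven : 2 ∣ ∑ i ∈ s.erase 0, 2 ^ i := by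
      apply Finset.dvd_sum
      intro i hi
      have : i ≠ 0 := Finset.ne_of_mem_erase hi
      exact dvd_pow_self 2 this
    omega

private lemma supp_lt {n a : ℕ} (ha : a ∈ n.bitIndices.toFinset) : a < n := by
  have h1 : 2 ^ a ≤ n := Nat.two_pow_le_of_mem_bitIndices (List.mem_toFinset.mp ha)
  have h2 : a < 2 ^ a := Nat.lt_two_pow_self
  omega

private lemma supp_ge_of_dvd {n k : ℕ} (h : 2 ^ k ∣ n) :
    ∀ a ∈ n.bitIndices.toFinset, k ≤ a := by
  intro a ha
  obtain ⟨m, rfl⟩ := h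
  rw [Nat.bitIndices_two_pow_mul] at ha
  rw [List.mem_toFinset, List.mem_map] at ha
  obtain ⟨x, -, rfl⟩ := ha
  omega

/-- pigeonhole: among later partial sums, some nonempty block sum is divisible by `2^m` -/
private lemma exists_block (b : ℕ → ℕ) (m n0 : ℕ) :
    ∃ S : Finset ℕ, S.Nonempty ∧ (∀ j ∈ S, n0 ≤ j) ∧ 2 ^ m ∣ ∑ j ∈ S, b j := by
  have hpos : 0 < 2 ^ m := pow_pos (by norm_num) m
  haveI : NeZero (2 ^ m) := ⟨hpos.ne'⟩
  obtain ⟨x, y, hxy, hf⟩ := Finite.exists_ne_map_eq_of_infinite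
    (fun k : ℕ => ((∑ j ∈ Finset.Ico n0 (n0 + k), b j : ℕ) : ZMod (2 ^ m)))
  have key : ∀ x y : ℕ, x < y →
      ((∑ j ∈ Finset.Ico n0 (n0 + x), b j : ℕ) : ZMod (2 ^ m)) =
        ((∑ j ∈ Finset.Ico n0 (n0 + y), b j : ℕ) : ZMod (2 ^ m)) →
      ∃ S : Finset ℕ, S.Nonempty ∧ (∀ j ∈ S, n0 ≤ j) ∧ 2 ^ m ∣ ∑ j ∈ S, b j := by
    intro x y hlt heq
    refine ⟨Finset.Ico (n0 + x) (n0 + y), ?_, ?_, ?_⟩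
    · rw [Finset.nonempty_Ico]; omega
    · intro j hj; rw [Finset.mem_Ico] at hj; omega
    · have hsum := Finset.sum_Ico_consecutive b
        (Nat.le_add_right n0 x) (by omega : n0 + x ≤ n0 + y)
      rw [← ZMod.natCast_eq_zero_iff]
      have : ((∑ j ∈ Finset.Ico n0 (n0 + x), b j : ℕ) : ZMod (2 ^ m)) +
          ((∑ j ∈ Finset.Ico (n0 + x) (n0 + y), b j : ℕ) : ZMod (2 ^ m)) =
          ((∑ j ∈ Finset.Ico n0 (n0 + y), b j : ℕ) : ZMod (2 ^ m)) := by
        rw [← Nat.cast_add, hsum]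
      rw [← heq] at this
      exact add_eq_left.mp this
  rcases hxy.lt_or_gt with h | h
  · exact key x y h hf
  · exact key y x h hf.symm

/-- Infinite Finite Unions Theorem: for any finite partition (cover) of the
collection of nonempty finite subsets of the positive integers into `r` cells,
there are a cell and a block sequence of nonempty finite sets all of whose
finite unions lie in that cell. -/
theorem infinite_finite_unions (r : ℕ) (hr : 0 < r) (𝓕 : Fin r → Set (Finset ℕ))
    (hcover : ∀ F : Finset ℕ, F.Nonempty → (∀ a ∈ F, 0 < a) → ∃ i, F ∈ 𝓕 i) :
    ∃ i : Fin r, ∃ F : ℕ → Finset ℕ,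
      (∀ t, (F t).Nonempty) ∧ (∀ t, ∀ a ∈ F t, 0 < a) ∧
      (∀ t, ∀ a ∈ F t, ∀ b ∈ F (t + 1), a < b) ∧
      (∀ H : Finset ℕ, H.Nonempty → H.biUnion F ∈ 𝓕 i) := by
  classical
  -- the stream of powers of two with positive exponents
  set a : Stream' ℕ := fun n => 2 ^ (n + 1) with ha
  -- every finite sum of `a` is positive and even
  have hPa : ∀ m ∈ Hindman.FS a, 0 < m ∧ 2 ∣ m := by
    intro m hm
    refine FS_forall (fun n => 0 < n ∧ 2 ∣ n) (fun x y hx hy => ⟨by omega, by omega⟩) hm ?_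
    intro n
    exact ⟨pow_pos (by norm_num) _, dvd_pow_self 2 (Nat.succ_ne_zero n)⟩
  -- the cover of ℕ induced by 𝓕 via binary supports
  set C : Fin r → Set ℕ :=
    fun i => {n | 0 < n ∧ 2 ∣ n ∧ n.bitIndices.toFinset ∈ 𝓕 i} with hC
  have scov : Hindman.FS a ⊆ ⋃₀ Set.range C := by
    intro m hm
    obtain ⟨hmpos, hmeven⟩ := hPa m hm
    obtain ⟨i, hi⟩ := hcover m.bitIndices.toFinset (supp_nonempty hmpos) (supp_pos hmeven)
    exact ⟨C i, ⟨i, rfl⟩, hmpos, hmeven, hi⟩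
  obtain ⟨c, ⟨i, rfl⟩, b, hb⟩ :=
    Hindman.FS_partition_regular a (Set.range C) (Set.finite_range C) scov
  -- basic properties of the sub-stream b
  have hbFS : ∀ m ∈ Hindman.FS b, 0 < m ∧ 2 ∣ m ∧ m.bitIndices.toFinset ∈ 𝓕 i := fun m hm => hb hm
  -- the block construction
  set β : ℕ → ℕ := fun j => b.get j with hβ
  set step : Finset ℕ → Finset ℕ :=
    fun T => (exists_block β ((∑ j ∈ T, β j) + 1) (T.sup id + 1)).choose with hstep
  set g : ℕ → Finset ℕ := fun k => Nat.rec {0} (fun _ T => step T) k with hg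
  have hg0 : g 0 = {0} := rfl
  have hgsucc : ∀ k, g (k + 1) = step (g k) := fun k => rfl
  have hstep_ne : ∀ T, (step T).Nonempty :=
    fun T => (exists_block β ((∑ j ∈ T, β j) + 1) (T.sup id + 1)).choose_spec.1
  have hstep_gt : ∀ T, ∀ j ∈ step T, T.sup id + 1 ≤ j :=
    fun T => (exists_block β ((∑ j ∈ T, β j) + 1) (T.sup id + 1)).choose_spec.2.1
  have hstep_dvd : ∀ T, 2 ^ ((∑ j ∈ T, β j) + 1) ∣ ∑ j ∈ step T, β j :=
    fun T => (exists_block β ((∑ j ∈ T, β j) + 1) (T.sup id + 1)).choose_spec.2.2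
  have hg_ne : ∀ k, (g k).Nonempty := by
    intro k
    cases k with
    | zero => exact ⟨0, by simp [hg0]⟩
    | succ k => rw [hgsucc]; exact hstep_ne _
  -- the sup of g is strictly increasing, hence g blocks are ordered
  have hg_sup : ∀ k, (g k).sup id < (g (k + 1)).sup id := by
    intro k
    obtain ⟨j, hj⟩ := hstep_ne (g k)
    have h1 := hstep_gt (g k) j hj
    have h2 : j ≤ (g (k + 1)).sup id := by
      rw [hgsucc]; exact Finset.le_sup (f := id) hj
    rw [hgsucc] at h2 ⊢
    omega
  have hg_sup_mono : StrictMono (fun k => (g k).sup id) := strictMono_nat_of_lt_succ hg_sup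
  have hg_ord : ∀ k l, k < l → ∀ j ∈ g k, ∀ j' ∈ g l, j < j' := by
    intro k l hkl j hj j' hj'
    obtain ⟨l, rfl⟩ := Nat.exists_eq_add_of_lt hkl
    have h1 : j ≤ (g k).sup id := Finset.le_sup (f := id) hj
    have h2 : (g (k + l)).sup id + 1 ≤ j' := by
      have := hstep_gt (g (k + l)) j' (by rwa [← hgsucc] )
      exact this
    have h3 : (g k).sup id ≤ (g (k + l)).sup id := hg_sup_mono.monotone (by omega)
    omega
  have hg_disj : ∀ (H : Finset ℕ), (↑H : Set ℕ).PairwiseDisjoint g := by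
    intro H k _ l _ hkl
    have : ∀ k l, k < l → Disjoint (g k) (g l) := by
      intro k l h
      rw [Finset.disjoint_left]
      intro x hx hx'
      exact absurd rfl (hg_ord k l h x hx x hx').ne
    rcases hkl.lt_or_gt with h | h
    · exact this k l h
    · exact (this l k h).symm
  -- the block sums
  set c : ℕ → ℕ := fun k => ∑ j ∈ g k, β j with hc
  have hcFS : ∀ k, c k ∈ Hindman.FS b := fun k => Hindman.FS.finset_sum b (g k) (hg_ne k)
  have hc_pos : ∀ k, 0 < c k := fun k => (hbFS _ (hcFS k)).1
  have hc_even : ∀ k, 2 ∣ c k := fun k => (hbFS _ (hcFS k)).2.1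
  set F : ℕ → Finset ℕ := fun k => (c k).bitIndices.toFinset with hF
  have hF_ne : ∀ k, (F k).Nonempty := fun k => supp_nonempty (hc_pos k)
  have hF_pos : ∀ k, ∀ x ∈ F k, 0 < x := fun k => supp_pos (hc_even k)
  have hF_lt : ∀ k, ∀ x ∈ F k, x < c k := fun k x hx => supp_lt hx
  have hF_gt : ∀ k, ∀ x ∈ F (k + 1), c k < x := by
    intro k x hx
    have hd : 2 ^ (c k + 1) ∣ c (k + 1) := by
      have := hstep_dvd (g k)
      rw [← hgsucc] at this
      exact this
    have := supp_ge_of_dvd hd x hx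
    omega
  have hc_mono : StrictMono c := by
    apply strictMono_nat_of_lt_succ
    intro k
    obtain ⟨x, hx⟩ := hF_ne (k + 1)
    exact lt_trans (hF_gt k x hx) (hF_lt (k + 1) x hx)
  have hF_ord : ∀ k l, k < l → ∀ x ∈ F k, ∀ y ∈ F l, x < y := by
    intro k l hkl x hx y hy
    cases l with
    | zero => omega
    | succ l =>
      have h1 : x < c k := hF_lt k x hx
      have h2 : c l < y := hF_gt l y hy
      have h3 : c k ≤ c l := hc_mono.monotone (by omega)
      omega
  have hF_disj : ∀ (H : Finset ℕ), (↑H : Set ℕ).PairwiseDisjoint F := by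
    intro H k _ l _ hkl
    have : ∀ k l, k < l → Disjoint (F k) (F l) := by
      intro k l h
      rw [Finset.disjoint_left]
      intro x hx hx'
      exact absurd rfl (hF_ord k l h x hx x hx').ne
    rcases hkl.lt_or_gt with h | h
    · exact this k l h
    · exact (this l k h).symm
  refine ⟨i, F, hF_ne, hF_pos, fun t => hF_ord t (t + 1) (by omega), ?_⟩
  -- finite unions
  intro H hH
  -- the union of blocks of indices
  have hGne : (H.biUnion g).Nonempty := by
    obtain ⟨k, hk⟩ := hH
    obtain ⟨j, hj⟩ := hg_ne k
    exact ⟨j, Finset.mem_biUnion.mpr ⟨k, hk, hj⟩⟩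
  have hsum1 : ∑ j ∈ H.biUnion g, β j = ∑ k ∈ H, c k := Finset.sum_biUnion (hg_disj H)
  have hsumFS : ∑ j ∈ H.biUnion g, β j ∈ Hindman.FS b :=
    Hindman.FS.finset_sum b (H.biUnion g) hGne
  have hmem := (hbFS _ hsumFS).2.2
  -- identify the support of the total sum with the union of the supports
  have hsum2 : ∑ k ∈ H, c k = ∑ x ∈ H.biUnion F, 2 ^ x := by
    rw [Finset.sum_biUnion (hF_disj H)]
    apply Finset.sum_congr rfl
    intro k _
    exact (Finset.twoPowSum_toFinset_bitIndices (c k)).symm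
  have hsupp : (∑ j ∈ H.biUnion g, β j).bitIndices.toFinset = H.biUnion F := by
    rw [hsum1, hsum2, Finset.toFinset_bitIndices_twoPowSum]
  rwa [hsupp] at hmem
end

section
/- (Finite Finite Unions Theorem) Let r and k be positive integers. There exists a positive integer m such that whenever the collection Fin({1,…,m}) of nonempty subsets of {1,…,m} is partitioned into r cells F_1 ∪ … ∪ F_r, there exist i ∈ {1,…,r} and a sequence ⟨F_t⟩_{t=1}^k of nonempty subsets of {1,…,m} such that max F_t < min F_{t+1} for every t ∈ {1,…,k−1}, and for every nonempty H ⊆ {1,…,k}, the union ⋃_{t∈H} F_t belongs to F_i. -/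
open Hindman Filter


open Finset in
noncomputable def bsupp (n : ℕ) : Finset ℕ := n.bitIndices.toFinset

lemma sum_bsupp (n : ℕ) : ∑ i ∈ bsupp n, 2 ^ i = n := Finset.twoPowSum_toFinset_bitIndices n

lemma bsupp_sum (s : Finset ℕ) : bsupp (∑ i ∈ s, 2 ^ i) = s :=
  Finset.toFinset_bitIndices_twoPowSum s

lemma bsupp_add_of_disjoint {x y : ℕ} (h : Disjoint (bsupp x) (bsupp y)) :
    bsupp (x + y) = bsupp x ∪ bsupp y := by
  conv_lhs => rw [← sum_bsupp x, ← sum_bsupp y, ← Finset.sum_union h]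
  exact bsupp_sum _

lemma bsupp_two_pow_mul (M z : ℕ) : bsupp (2 ^ M * z) = (bsupp z).image (· + M) := by
  conv_lhs => rw [← sum_bsupp z, Finset.mul_sum]
  rw [← bsupp_sum ((bsupp z).image (· + M)), Finset.sum_image (by intro a _ b _ h; simpa using h)]
  congr 1
  refine Finset.sum_congr rfl fun i _ => ?_
  rw [pow_add, mul_comm]

lemma lt_of_mem_bsupp {n M i : ℕ} (hn : n < 2 ^ M) (hi : i ∈ bsupp n) : i < M := by
  by_contra h
  have : 2 ^ i ≤ n := by
    conv_rhs => rw [← sum_bsupp n]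
    exact Finset.single_le_sum (fun j _ => Nat.zero_le _) hi
  exact absurd (le_trans (Nat.pow_le_pow_right (by norm_num) (by omega : M ≤ i)) this) (by omega)

lemma le_of_mem_bsupp {n M i : ℕ} (hn : 2 ^ M ∣ n) (hi : i ∈ bsupp n) : M ≤ i := by
  obtain ⟨z, rfl⟩ := hn
  rw [bsupp_two_pow_mul] at hi
  obtain ⟨j, _, rfl⟩ := Finset.mem_image.mp hi
  omega

lemma bsupp_nonempty {n : ℕ} (hn : 0 < n) : (bsupp n).Nonempty := by
  rcases Finset.eq_empty_or_nonempty (bsupp n) with h | h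
  · have := sum_bsupp n; rw [h, Finset.sum_empty] at this; omega
  · exact h

open Hindman

lemma FS_pos {a : Stream' ℕ} {m : ℕ} (hm : m ∈ FS a) (ha : ∀ n, 0 < a.get n) : 0 < m := by
  induction hm with
  | head' a => exact ha 0
  | tail' a m h ih => exact ih fun n => ha (n + 1)
  | cons' a m h ih => have := ha 0; have := ih fun n => ha (n + 1); omega

/-- key pigeonhole step: a block of indices past `p` whose sum is divisible by `2^M`. -/
lemma exists_block_s3 (b : Stream' ℕ) (hb : ∀ j, 0 < b.get j) (p M : ℕ) :
    ∃ T : Finset ℕ, T.Nonempty ∧ (∀ j ∈ T, p ≤ j) ∧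
      2 ^ M ∣ ∑ j ∈ T, b.get j ∧ 0 < ∑ j ∈ T, b.get j := by
  have hmap : ∀ t ∈ Finset.range (2 ^ M + 1),
      (∑ j ∈ Finset.Ico p (p + t), b.get j) % 2 ^ M ∈ Finset.range (2 ^ M) := by
    intro t _
    exact Finset.mem_range.mpr (Nat.mod_lt _ (by positivity))
  obtain ⟨t1, ht1, t2, ht2, hne, heq⟩ :=
    Finset.exists_ne_map_eq_of_card_lt_of_maps_to (by simp) hmap
  wlog hlt : t1 < t2 generalizing t1 t2
  · exact this t2 ht2 t1 ht1 hne.symm heq.symm (by omega)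
  refine ⟨Finset.Ico (p + t1) (p + t2), ⟨p + t1, by simp; omega⟩, fun j hj => ?_, ?_, ?_⟩
  · simp only [Finset.mem_Ico] at hj; omega
  · have hsplit : ∑ j ∈ Finset.Ico p (p + t1), b.get j + ∑ j ∈ Finset.Ico (p + t1) (p + t2), b.get j
        = ∑ j ∈ Finset.Ico p (p + t2), b.get j := by
      rw [Finset.sum_Ico_consecutive] <;> omega
    have hmod : (∑ j ∈ Finset.Ico p (p + t1), b.get j) +
        (∑ j ∈ Finset.Ico (p + t1) (p + t2), b.get j)
        ≡ (∑ j ∈ Finset.Ico p (p + t1), b.get j) + 0 [MOD 2 ^ M] := by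
      rw [hsplit, Nat.add_zero]
      exact heq.symm
    exact (Nat.modEq_zero_iff_dvd).mp (Nat.ModEq.add_left_cancel' _ hmod)
  · refine Finset.sum_pos (fun j _ => hb j) ⟨p + t1, by simp; omega⟩

open Hindman

lemma main_extract (b : Stream' ℕ) (hb : ∀ j, 0 < b.get j) :
    ∃ G : ℕ → Finset ℕ,
      (∀ t, (G t).Nonempty) ∧
      (∀ t t', t < t' → ∀ i ∈ G t, ∀ i' ∈ G t', i < i') ∧
      (∀ H : Finset ℕ, H.Nonempty → ∃ y ∈ FS b, bsupp y = H.biUnion G) := by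
  choose f hf1 hf2 hf3 hf4 using exists_block_s3 b hb
  set st : ℕ → ℕ × ℕ := fun t =>
    Nat.rec (0, 0) (fun _ s => ((f s.1 s.2).sup id + 1, ∑ j ∈ f s.1 s.2, b.get j)) t with hst
  set T : ℕ → Finset ℕ := fun t => f (st t).1 (st t).2 with hT
  set y : ℕ → ℕ := fun t => ∑ j ∈ T t, b.get j with hy
  have hstep : ∀ t, st (t + 1) = ((T t).sup id + 1, y t) := fun t => rfl
  have hypos : ∀ t, 0 < y t := fun t => hf4 _ _
  have hydvd : ∀ t, 2 ^ (st t).2 ∣ y t := fun t => hf3 _ _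
  -- index bounds
  have hTub : ∀ t, ∀ j ∈ T t, j < (st (t + 1)).1 := by
    intro t j hj
    rw [hstep]
    exact Nat.lt_succ_of_le (Finset.le_sup (f := id) hj)
  have hTlb : ∀ t, ∀ j ∈ T t, (st t).1 ≤ j := fun t j hj => hf2 _ _ j hj
  have hpmono : Monotone fun t => (st t).1 := by
    apply monotone_nat_of_le_succ
    intro t
    obtain ⟨j, hj⟩ := hf1 (st t).1 (st t).2
    exact le_trans (hTlb t j hj) (le_of_lt (hTub t j hj))
  have hTord : ∀ t t', t < t' → ∀ j ∈ T t, ∀ j' ∈ T t', j < j' := by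
    intro t t' htt j hj j' hj'
    exact lt_of_lt_of_le (hTub t j hj) (le_trans (hpmono htt) (hTlb t' j' hj'))
  -- bit bounds
  have hMlt : ∀ t, (st t).2 < (st (t + 1)).2 := by
    intro t
    rw [hstep]
    exact lt_of_lt_of_le Nat.lt_two_pow_self (Nat.le_of_dvd (hypos t) (hydvd t))
  have hMmono : StrictMono fun t => (st t).2 := strictMono_nat_of_lt_succ hMlt
  have hSub : ∀ t, ∀ i ∈ bsupp (y t), i < (st (t + 1)).2 := by
    intro t i hi
    rw [hstep]
    exact lt_of_mem_bsupp Nat.lt_two_pow_self hi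
  have hSlb : ∀ t, ∀ i ∈ bsupp (y t), (st t).2 ≤ i := fun t i hi =>
    le_of_mem_bsupp (hydvd t) hi
  have hSord : ∀ t t', t < t' → ∀ i ∈ bsupp (y t), ∀ i' ∈ bsupp (y t'), i < i' := by
    intro t t' htt i hi i' hi'
    exact lt_of_lt_of_le (hSub t i hi) (le_trans (hMmono.monotone htt) (hSlb t' i' hi'))
  have hdisjT : ∀ H : Finset ℕ, (↑H : Set ℕ).PairwiseDisjoint T := by
    intro H t _ t' _ hne
    rcases Nat.lt_or_ge t t' with h | h
    · exact Finset.disjoint_left.mpr fun j hj hj' => absurd (hTord t t' h j hj j hj') (lt_irrefl j)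
    · have h' : t' < t := lt_of_le_of_ne h (Ne.symm hne)
      exact Finset.disjoint_left.mpr fun j hj hj' => absurd (hTord t' t h' j hj' j hj) (lt_irrefl j)
  have hsupp : ∀ H : Finset ℕ, H.Nonempty →
      bsupp (∑ t ∈ H, y t) = H.biUnion fun t => bsupp (y t) := by
    intro H hH
    induction H using Finset.induction with
    | empty => exact absurd hH (by simp)
    | @insert a s ha ih =>
      rcases Finset.eq_empty_or_nonempty s with rfl | hs
      · simp
      · rw [Finset.sum_insert ha, Finset.biUnion_insert, ← ih hs]
        refine bsupp_add_of_disjoint ?_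
        rw [ih hs]
        refine Finset.disjoint_biUnion_right _ _ _ |>.mpr fun t ht => ?_
        rcases Nat.lt_or_ge a t with h | h
        · exact Finset.disjoint_left.mpr fun i hi hi' => absurd (hSord a t h i hi i hi') (lt_irrefl i)
        · have h' : t < a := lt_of_le_of_ne h (fun e => ha (e ▸ ht))
          exact Finset.disjoint_left.mpr fun i hi hi' => absurd (hSord t a h' i hi' i hi) (lt_irrefl i)
  refine ⟨fun t => bsupp (y t), fun t => bsupp_nonempty (hypos t), hSord, ?_⟩
  intro H hH
  refine ⟨∑ t ∈ H, y t, ?_, hsupp H hH⟩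
  have : ∑ t ∈ H, y t = ∑ j ∈ H.biUnion T, b.get j := (Finset.sum_biUnion (hdisjT H)).symm
  rw [this]
  refine FS.finset_sum b _ ?_
  obtain ⟨t, ht⟩ := hH
  obtain ⟨j, hj⟩ := hf1 (st t).1 (st t).2
  exact ⟨j, Finset.mem_biUnion.mpr ⟨t, ht, hj⟩⟩

open Hindman

/-- Infinite finite-unions theorem from Hindman. -/
lemma infinite_FU {r : ℕ} (hr : 0 < r) (c : Finset ℕ → Fin r) :
    ∃ (i : Fin r) (G : ℕ → Finset ℕ),
      (∀ t, (G t).Nonempty) ∧ (∀ t, ∀ x ∈ G t, 1 ≤ x) ∧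
      (∀ t t', t < t' → ∀ a ∈ G t, ∀ b ∈ G t', a < b) ∧
      (∀ H : Finset ℕ, H.Nonempty → c (H.biUnion G) = i) := by
  set χ : ℕ → Fin r := fun n => c ((bsupp n).image (· + 1)) with hχ
  have hcov : FS (Stream'.const (1 : ℕ)) ⊆ ⋃₀ Set.range (fun i : Fin r => {n | 0 < n ∧ χ n = i}) := by
    intro n hn
    have hpos : 0 < n := FS_pos hn fun _ => Nat.one_pos
    exact ⟨{m | 0 < m ∧ χ m = χ n}, ⟨χ n, rfl⟩, hpos, rfl⟩
  obtain ⟨s, ⟨i, rfl⟩, b, hb⟩ := FS_partition_regular (Stream'.const (1 : ℕ)) _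
    (Set.finite_range _) hcov
  have hbpos : ∀ j, 0 < b.get j := fun j => (hb (FS.singleton b j)).1
  obtain ⟨G₀, hG1, hG2, hG3⟩ := main_extract b hbpos
  refine ⟨i, fun t => (G₀ t).image (· + 1), fun t => (hG1 t).image _, ?_, ?_, ?_⟩
  · intro t x hx
    obtain ⟨y, _, rfl⟩ := Finset.mem_image.mp hx
    omega
  · intro t t' htt a ha b' hb'
    obtain ⟨x, hx, rfl⟩ := Finset.mem_image.mp ha
    obtain ⟨x', hx', rfl⟩ := Finset.mem_image.mp hb'
    have := hG2 t t' htt x hx x' hx'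
    omega
  · intro H hH
    obtain ⟨y, hyFS, hysupp⟩ := hG3 H hH
    have : H.biUnion (fun t => (G₀ t).image (· + 1)) = (bsupp y).image (· + 1) := by
      rw [hysupp, Finset.biUnion_image]
    rw [this]
    exact (hb hyFS).2

open Hindman Filter

/-- Finite Finite Unions Theorem: given `r` and `k` there is an `m` such that
for any partition (cover) of the nonempty subsets of `{1,…,m}` into `r` cells,
there are a cell and a block sequence `F_0,…,F_{k-1}` of nonempty subsets of
`{1,…,m}` all of whose unions over nonempty subsets of indices lie in that cell. -/
theorem finite_finite_unions (r k : ℕ) (hr : 0 < r) (hk : 0 < k) :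
    ∃ m : ℕ, 0 < m ∧ ∀ 𝓕 : Fin r → Set (Finset ℕ),
      (∀ F : Finset ℕ, F.Nonempty → F ⊆ Finset.Icc 1 m → ∃ i, F ∈ 𝓕 i) →
      ∃ i : Fin r, ∃ F : ℕ → Finset ℕ,
        (∀ t < k, (F t).Nonempty) ∧ (∀ t < k, F t ⊆ Finset.Icc 1 m) ∧
        (∀ t, t + 1 < k → ∀ a ∈ F t, ∀ b ∈ F (t + 1), a < b) ∧
        (∀ H ⊆ Finset.range k, H.Nonempty → H.biUnion F ∈ 𝓕 i) := by
  by_contra hcon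
  push_neg at hcon
  have h' : ∀ m : ℕ, ∃ 𝓕 : Fin r → Set (Finset ℕ),
      (∀ F : Finset ℕ, F.Nonempty → F ⊆ Finset.Icc 1 (m + 1) → ∃ i, F ∈ 𝓕 i) ∧
      ¬ ∃ i : Fin r, ∃ F : ℕ → Finset ℕ,
        (∀ t < k, (F t).Nonempty) ∧ (∀ t < k, F t ⊆ Finset.Icc 1 (m + 1)) ∧
        (∀ t, t + 1 < k → ∀ a ∈ F t, ∀ b ∈ F (t + 1), a < b) ∧
        (∀ H ⊆ Finset.range k, H.Nonempty → H.biUnion F ∈ 𝓕 i) := by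
    intro m
    obtain ⟨𝓕, h1, h2⟩ := hcon (m + 1) (Nat.succ_pos m)
    refine ⟨𝓕, h1, ?_⟩
    rintro ⟨i, F, hF1, hF2, hF3, hF4⟩
    obtain ⟨H, hHsub, hHne, hHmem⟩ := h2 i F hF1 hF2 hF3
    exact hHmem (hF4 H hHsub hHne)
  choose 𝓕m hcov hbad using h'
  -- pointwise coloring for each m
  have hrne : Nonempty (Fin r) := ⟨⟨0, hr⟩⟩
  classical
  set cm : ℕ → Finset ℕ → Fin r := fun m F =>
    if hx : ∃ i, F ∈ 𝓕m m i then hx.choose else ⟨0, hr⟩ with hcm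
  have cmem : ∀ m F, (∃ i, F ∈ 𝓕m m i) → F ∈ 𝓕m m (cm m F) := by
    intro m F hx
    simp only [hcm, dif_pos hx]
    exact hx.choose_spec
  -- ultrafilter limit coloring
  set U : Ultrafilter ℕ := hyperfilter ℕ with hU
  have hlim : ∀ F : Finset ℕ, ∃ i : Fin r, {m | cm m F = i} ∈ U := by
    intro F
    have hun : (⋃ i ∈ (Set.univ : Set (Fin r)), {m | cm m F = i}) ∈ U := by
      have : (⋃ i ∈ (Set.univ : Set (Fin r)), {m | cm m F = i}) = Set.univ := by
        ext m; simp
      rw [this]; exact Filter.univ_mem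
    obtain ⟨i, _, hi⟩ := (Ultrafilter.finite_biUnion_mem_iff Set.finite_univ).mp hun
    exact ⟨i, hi⟩
  choose cl hcl using hlim
  obtain ⟨i, G, hG1, hG2, hG3, hG4⟩ := infinite_FU hr cl
  -- the bound on the elements appearing
  set B : ℕ := ((Finset.range k).biUnion G).sup id with hB
  have hGB : ∀ t < k, ∀ x ∈ G t, x ≤ B :=
    fun t ht x hx => Finset.le_sup (f := id)
      (Finset.mem_biUnion.mpr ⟨t, Finset.mem_range.mpr ht, hx⟩)
  -- a good m
  have hE1 : {m | ∀ H ∈ (Finset.range k).powerset, H.Nonempty → cm m (H.biUnion G) = i} ∈ U := by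
    have := (Filter.eventually_all_finset ((Finset.range k).powerset)
      (l := (U : Filter ℕ))
      (p := fun H m => H.Nonempty → cm m (H.biUnion G) = i)).mpr ?_
    · exact this
    · intro H _
      rcases Finset.eq_empty_or_nonempty H with rfl | hH
      · filter_upwards with m h; exact absurd h (by simp)
      · have : cl (H.biUnion G) = i := hG4 H hH
        filter_upwards [hcl (H.biUnion G)] with m hm _ using this ▸ hm
  have hE2 : {m | B ≤ m} ∈ U := by
    refine Filter.mem_hyperfilter_of_finite_compl ?_
    have : {m : ℕ | B ≤ m}ᶜ = {m | m < B} := by ext m; simp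
    rw [this]; exact Set.finite_lt_nat B
  obtain ⟨m₀, hm1, hm2⟩ := Ultrafilter.nonempty_of_mem (Filter.inter_mem hE1 hE2)
  -- derive contradiction with hbad m₀
  refine hbad m₀ ⟨i, G, fun t _ => hG1 t, ?_, ?_, ?_⟩
  · intro t ht x hx
    exact Finset.mem_Icc.mpr ⟨hG2 t x hx, le_trans (hGB t ht x hx) (le_trans hm2 (Nat.le_succ m₀))⟩
  · intro t ht a ha b hb
    exact hG3 t (t + 1) (Nat.lt_succ_self t) a ha b hb
  · intro H hHsub hH
    have hsub : H.biUnion G ⊆ Finset.Icc 1 (m₀ + 1) := by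
      intro x hx
      obtain ⟨t, ht, hxt⟩ := Finset.mem_biUnion.mp hx
      have htk := Finset.mem_range.mp (hHsub ht)
      exact Finset.mem_Icc.mpr ⟨hG2 t x hxt,
        le_trans (hGB t htk x hxt) (le_trans hm2 (Nat.le_succ m₀))⟩
    have hne : (H.biUnion G).Nonempty := by
      obtain ⟨t, ht⟩ := hH
      obtain ⟨x, hx⟩ := hG1 t
      exact ⟨x, Finset.mem_biUnion.mpr ⟨t, ht, hx⟩⟩
    have hex : ∃ j, H.biUnion G ∈ 𝓕m m₀ j := hcov m₀ _ hne hsub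
    have hceq : cm m₀ (H.biUnion G) = i := hm1 H (Finset.mem_powerset.mpr hHsub) hH
    have := cmem m₀ (H.biUnion G) hex
    rwa [hceq] at this
end

section
/- (Finite Finite Sums Theorem / Folkman's Theorem) Let k and r be positive integers. There exists a positive integer m such that whenever {1,…,m} is partitioned into r cells B_1 ∪ … ∪ B_r, there exist i ∈ {1,…,r} and positive integers x_1,…,x_k such that ∑_{t∈F} x_t ∈ B_i for every nonempty F ⊆ {1,…,k}. -/
open Combinatorics Finset

/-- Finitary van der Waerden, derived from the Hales–Jewett theorem. -/
theorem vdw_fin (n r : ℕ) [NeZero r] :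
    ∃ N : ℕ, ∀ χ : ℕ → Fin r, ∃ a d : ℕ, 1 ≤ a ∧ 1 ≤ d ∧ a + n * d ≤ N ∧
      ∀ j ≤ n, χ (a + j * d) = χ a := by
  obtain ⟨ι, ιfin, hι⟩ := Line.exists_mono_in_high_dimension (Fin (n+1)) (Fin r)
  refine ⟨1 + Fintype.card ι * n, fun χ => ?_⟩
  obtain ⟨l, c, hc⟩ := hι (fun v => χ (1 + ∑ i, (v i : ℕ)))
  classical
  set S : Finset ι := Finset.univ.filter (fun i => l.idxFun i = none) with hS
  have hsum : ∀ x : Fin (n+1), (∑ i, ((l x i : Fin (n+1)) : ℕ))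
      = (∑ i ∈ Finset.univ.filter (fun i => ¬ l.idxFun i = none),
          ((l (0 : Fin (n+1)) i : Fin (n+1)) : ℕ)) + S.card * (x : ℕ) := by
    intro x
    rw [← Finset.sum_filter_add_sum_filter_not Finset.univ (fun i => l.idxFun i = none)]
    have h1 : (∑ i ∈ S, ((l x i : Fin (n+1)) : ℕ)) = S.card * (x : ℕ) := by
      rw [Finset.sum_congr rfl (fun i hi => ?_), Finset.sum_const, smul_eq_mul]
      simp only [hS, Finset.mem_filter] at hi
      show ((Option.getD (l.idxFun i) x : Fin (n+1)) : ℕ) = (x : ℕ)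
      rw [hi.2, Option.getD_none]
    have h2 : (∑ i ∈ Finset.univ.filter (fun i => ¬ l.idxFun i = none),
          ((l x i : Fin (n+1)) : ℕ))
        = (∑ i ∈ Finset.univ.filter (fun i => ¬ l.idxFun i = none),
          ((l (0 : Fin (n+1)) i : Fin (n+1)) : ℕ)) := by
      refine Finset.sum_congr rfl (fun i hi => ?_)
      simp only [Finset.mem_filter] at hi
      obtain ⟨a, ha⟩ := Option.ne_none_iff_exists'.1 hi.2
      show ((Option.getD (l.idxFun i) x : Fin (n+1)) : ℕ)
        = ((Option.getD (l.idxFun i) 0 : Fin (n+1)) : ℕ)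
      rw [ha]; rfl
    rw [h1, h2]; omega
  set C0 : ℕ := ∑ i ∈ Finset.univ.filter (fun i => ¬ l.idxFun i = none),
          ((l (0 : Fin (n+1)) i : Fin (n+1)) : ℕ) with hC0
  refine ⟨1 + C0, S.card, Nat.le_add_right 1 C0, ?_, ?_, ?_⟩
  · obtain ⟨i, hi⟩ := l.proper
    exact Finset.card_pos.2 ⟨i, by simp [hS, hi]⟩
  · have h1 : C0 ≤ (Finset.univ.filter (fun i => ¬ l.idxFun i = none)).card * n := by
      rw [hC0]
      calc _ ≤ ∑ _i ∈ Finset.univ.filter (fun i => ¬ l.idxFun i = none), n :=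
            Finset.sum_le_sum (fun i _ => Nat.lt_succ_iff.1 (Fin.is_lt _))
        _ = _ := by rw [Finset.sum_const, smul_eq_mul]
    have h2 : (Finset.univ.filter (fun i => ¬ l.idxFun i = none)).card + S.card
        = Fintype.card ι := by
      have h3 := Finset.card_filter_add_card_filter_not
        (s := (Finset.univ : Finset ι)) (p := fun i => l.idxFun i = none)
      rw [Finset.card_univ] at h3
      simp only [hS]
      omega
    nlinarith [h1, h2]
  · intro j hj
    have key : ∀ j : ℕ, j ≤ n → χ (1 + C0 + j * S.card) = c := by
      intro j hj
      have := hc ⟨j, Nat.lt_succ_of_le hj⟩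
      simp only at this
      rw [hsum ⟨j, Nat.lt_succ_of_le hj⟩] at this
      convert this using 2
      simp [mul_comm]; omega
    have h0 := key 0 (Nat.zero_le n)
    rw [Nat.zero_mul, Nat.add_zero] at h0
    rw [key j hj, h0]

/-- Weak Folkman lemma: a bounded window in which any `r`-coloring admits a
`k`-term sequence whose nonempty subset sums have color depending only on the
largest index in the subset. -/
theorem folk_weak (r : ℕ) [NeZero r] (k : ℕ) : ∃ N : ℕ, 0 < N ∧ ∀ χ : ℕ → Fin r,
    ∃ (x : ℕ → ℕ) (c : ℕ → Fin r),
      (∀ t ∈ Finset.Icc 1 k, 0 < x t) ∧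
      (∀ F ⊆ Finset.Icc 1 k, ∀ j ∈ F, (∀ t ∈ F, t ≤ j) →
        (∑ t ∈ F, x t ≤ N ∧ χ (∑ t ∈ F, x t) = c j)) := by
  induction k with
  | zero =>
    refine ⟨1, one_pos, fun χ => ⟨fun _ => 1, fun _ => χ 0, by simp, ?_⟩⟩
    intro F hF j hj _
    have : F = ∅ := Finset.subset_empty.1 (by simpa using hF)
    subst this; simp at hj
  | succ k ih =>
    obtain ⟨N, hNpos, hfolk⟩ := ih
    obtain ⟨M, hvdw⟩ := vdw_fin N r
    refine ⟨M + 1, Nat.succ_pos M, fun χ => ?_⟩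
    obtain ⟨a, d, ha, hd, hbound, hAP⟩ := hvdw χ
    obtain ⟨x, c, hxpos, hxF⟩ := hfolk (fun t => χ (d * t))
    classical
    refine ⟨fun t => if t = k + 1 then a else d * x t,
      fun j => if j = k + 1 then χ a else c j, ?_, ?_⟩
    · intro t ht
      rw [Finset.mem_Icc] at ht
      by_cases h : t = k + 1
      · simp [h]; omega
      · have ht' : t ∈ Finset.Icc 1 k := Finset.mem_Icc.2 ⟨ht.1, by omega⟩
        simp only [if_neg h]
        exact Nat.mul_pos hd (hxpos t ht')
    · intro F hF j hj hmax
      by_cases hjk : j = k + 1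
      · -- j = k+1, so k+1 ∈ F
        subst hjk
        set F' := F.erase (k + 1) with hF'
        have hF'sub : F' ⊆ Finset.Icc 1 k := by
          intro t ht
          rw [hF', Finset.mem_erase] at ht
          have := hF ht.2
          rw [Finset.mem_Icc] at this ⊢
          exact ⟨this.1, by omega⟩
        have hsplit : (∑ t ∈ F, if t = k + 1 then a else d * x t)
            = a + d * ∑ t ∈ F', x t := by
          rw [← Finset.add_sum_erase _ _ hj, if_pos rfl, Finset.mul_sum]
          congr 1
          refine Finset.sum_congr rfl (fun t ht => ?_)
          rw [Finset.mem_erase] at ht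
          rw [if_neg ht.1]
        have hsle : (∑ t ∈ F', x t) ≤ N := by
          rcases Finset.eq_empty_or_nonempty F' with he | hne
          · simp [he]
          · have hm := Finset.max'_mem F' hne
            exact (hxF F' hF'sub (F'.max' hne) hm
              (fun t ht => Finset.le_max' F' t ht)).1
        constructor
        · rw [hsplit]
          have : d * (∑ t ∈ F', x t) ≤ d * N := Nat.mul_le_mul_left d hsle
          calc a + d * ∑ t ∈ F', x t ≤ a + d * N := by omega
            _ = a + N * d := by ring
            _ ≤ M + 1 := by omega
        · rw [hsplit]
          simp only [↓reduceIte]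
          have := hAP (∑ t ∈ F', x t) hsle
          rw [mul_comm _ d] at this
          exact this
      · -- j ≠ k+1, so F ⊆ Icc 1 k
        have hFsub : F ⊆ Finset.Icc 1 k := by
          intro t ht
          have h1 := hF ht
          have h2 := hmax t ht
          have h3 := hF hj
          rw [Finset.mem_Icc] at h1 h3 ⊢
          exact ⟨h1.1, by omega⟩
        have hne : ∀ t ∈ F, ¬ t = k + 1 := fun t ht h => by
          have := Finset.mem_Icc.1 (hFsub ht); omega
        have hsplit : (∑ t ∈ F, if t = k + 1 then a else d * x t)
            = d * ∑ t ∈ F, x t := by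
          rw [Finset.mul_sum]
          exact Finset.sum_congr rfl (fun t ht => by rw [if_neg (hne t ht)])
        obtain ⟨hle, hcol⟩ := hxF F hFsub j hj hmax
        constructor
        · rw [hsplit]
          have : d * (∑ t ∈ F, x t) ≤ d * N := Nat.mul_le_mul_left d hle
          have : d * N = N * d := by ring
          omega
        · rw [hsplit]
          simp only [if_neg hjk]
          exact hcol

/-- Finite Finite Sums Theorem (Folkman's Theorem): given `k` and `r` there is
an `m` such that for any partition (cover) of `{1,…,m}` into `r` cells, some
cell contains all finite sums of a `k`-term sequence of positive integers. -/
theorem finite_finite_sums (k r : ℕ) (hk : 0 < k) (hr : 0 < r) :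
    ∃ m : ℕ, 0 < m ∧ ∀ B : Fin r → Set ℕ,
      (∀ i, B i ⊆ Set.Icc 1 m) →
      (∀ n ∈ Set.Icc 1 m, ∃ i, n ∈ B i) →
      ∃ i : Fin r, ∃ x : ℕ → ℕ, (∀ t ∈ Finset.Icc 1 k, 0 < x t) ∧
        ∀ F ⊆ Finset.Icc 1 k, F.Nonempty → ∑ t ∈ F, x t ∈ B i := by
  haveI : NeZero r := ⟨hr.ne'⟩
  classical
  set K : ℕ := r * (k - 1) + 1 with hK
  obtain ⟨N, hNpos, hfolk⟩ := folk_weak r K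
  refine ⟨N, hNpos, fun B hBsub hBcov => ?_⟩
  -- build a coloring from the cover
  set χ : ℕ → Fin r := fun n =>
    if h : n ∈ Set.Icc 1 N then Classical.choose (hBcov n h) else Classical.arbitrary (Fin r)
    with hχ
  have hχ_mem : ∀ n ∈ Set.Icc 1 N, n ∈ B (χ n) := by
    intro n hn
    rw [hχ]
    simp only [dif_pos hn]
    exact Classical.choose_spec (hBcov n hn)
  obtain ⟨x, c, hxpos, hxF⟩ := hfolk χ
  -- pigeonhole: some color has at least k indices in Icc 1 K
  have hpig : ∃ i : Fin r, k ≤ ((Finset.Icc 1 K).filter (fun j => c j = i)).card := by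
    obtain ⟨i, _, hi⟩ := Finset.exists_lt_card_fiber_of_mul_lt_card_of_maps_to
      (s := Finset.Icc 1 K) (t := Finset.univ) (f := c) (n := k - 1)
      (fun a _ => Finset.mem_univ _)
      (by rw [Finset.card_univ, Fintype.card_fin, Nat.card_Icc]; omega)
    exact ⟨i, by omega⟩
  obtain ⟨i, hi⟩ := hpig
  set T : Finset ℕ := (Finset.Icc 1 K).filter (fun j => c j = i) with hT
  obtain ⟨T', hT'sub, hT'card⟩ := Finset.exists_subset_card_eq hi
  set e := T'.orderIsoOfFin hT'card with he
  set g : ℕ → ℕ := fun t => if h : t - 1 < k then (e ⟨t - 1, h⟩ : ℕ) else 0 with hg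
  have hg_mem : ∀ t ∈ Finset.Icc 1 k, g t ∈ T' := by
    intro t ht
    rw [Finset.mem_Icc] at ht
    have h : t - 1 < k := by omega
    rw [hg]; simp only [dif_pos h]
    exact (e ⟨t - 1, h⟩).2
  have hg_mono : ∀ s ∈ Finset.Icc 1 k, ∀ t ∈ Finset.Icc 1 k, s < t → g s < g t := by
    intro s hs t ht hst
    rw [Finset.mem_Icc] at hs ht
    have h1 : s - 1 < k := by omega
    have h2 : t - 1 < k := by omega
    rw [hg]; simp only [dif_pos h1, dif_pos h2]
    have : (⟨s - 1, h1⟩ : Fin k) < ⟨t - 1, h2⟩ := by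
      rw [Fin.mk_lt_mk]; omega
    exact_mod_cast e.strictMono this
  have hT_Icc : ∀ t ∈ Finset.Icc 1 k, g t ∈ Finset.Icc 1 K := by
    intro t ht
    have := hT'sub (hg_mem t ht)
    rw [hT, Finset.mem_filter] at this
    exact this.1
  have hT_col : ∀ t ∈ Finset.Icc 1 k, c (g t) = i := by
    intro t ht
    have := hT'sub (hg_mem t ht)
    rw [hT, Finset.mem_filter] at this
    exact this.2
  refine ⟨i, fun t => x (g t), fun t ht => hxpos _ (hT_Icc t ht), ?_⟩
  intro F hF hFne
  set j : ℕ := F.max' hFne with hj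
  have hjF : j ∈ F := F.max'_mem hFne
  have hjmax : ∀ t ∈ F, t ≤ j := fun t ht => F.le_max' t ht
  set G : Finset ℕ := F.image g with hG
  have hinj : ∀ s ∈ F, ∀ t ∈ F, g s = g t → s = t := by
    intro s hs t ht hgst
    rcases lt_trichotomy s t with h | h | h
    · exact absurd hgst (Nat.ne_of_lt (hg_mono s (hF hs) t (hF ht) h))
    · exact h
    · exact absurd hgst.symm (Nat.ne_of_lt (hg_mono t (hF ht) s (hF hs) h))
  have hsum_eq : (∑ t ∈ F, x (g t)) = ∑ s ∈ G, x s := by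
    rw [hG, Finset.sum_image hinj]
  have hGsub : G ⊆ Finset.Icc 1 K := by
    intro s hs
    rw [hG, Finset.mem_image] at hs
    obtain ⟨t, ht, rfl⟩ := hs
    exact hT_Icc t (hF ht)
  have hgjG : g j ∈ G := Finset.mem_image_of_mem g hjF
  have hgjmax : ∀ s ∈ G, s ≤ g j := by
    intro s hs
    rw [hG, Finset.mem_image] at hs
    obtain ⟨t, ht, rfl⟩ := hs
    rcases eq_or_lt_of_le (hjmax t ht) with h | h
    · rw [h]
    · exact le_of_lt (hg_mono t (hF ht) j (hF hjF) h)
  obtain ⟨hle, hcol⟩ := hxF G hGsub (g j) hgjG hgjmax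
  have hpos : 0 < ∑ s ∈ G, x s :=
    Finset.sum_pos (fun s hs => hxpos s (hGsub hs)) ⟨g j, hgjG⟩
  have hmem : (∑ s ∈ G, x s) ∈ Set.Icc 1 N := ⟨hpos, hle⟩
  have := hχ_mem _ hmem
  rw [hcol, hT_col j (hF hjF)] at this
  rw [hsum_eq]
  exact this
end

section
/- Let k, r, s be positive integers with k ≤ s. There exists a positive integer m such that whenever A is a set with exactly m elements and the collection Fin(A) of nonempty finite subsets of A is partitioned into r cells F_1 ∪ … ∪ F_r, there exist a function φ : {1,…,k} → {1,…,r} and a subset B ⊆ A with exactly s elements such that for every nonempty finite C ⊆ B, if t = #C and t ≤ k, then C ∈ F_{φ(t)}. -/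
/-- Finite hypergraph Ramsey theorem over `ℕ`: for any `n, s` there is `m`
such that any `Fin r`-coloring of the `n`-element subsets of a set of size
at least `m` admits a monochromatic subset of size at least `s`. -/
private lemma ramseyN (r : ℕ) (hr : 0 < r) :
    ∀ n s : ℕ, ∃ m : ℕ, ∀ A : Finset ℕ, m ≤ A.card → ∀ f : Finset ℕ → Fin r,
      ∃ B, B ⊆ A ∧ s ≤ B.card ∧ ∃ c, ∀ C ⊆ B, C.card = n → f C = c := by
  intro n
  induction n with
  | zero =>
    intro s
    refine ⟨s, fun A hA f => ⟨A, Finset.Subset.refl A, hA, f ∅, fun C _ h0 => ?_⟩⟩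
    rw [Finset.card_eq_zero] at h0; rw [h0]
  | succ n IH =>
    -- end-homogeneous extraction
    have ext : ∀ t : ℕ, ∃ m : ℕ, ∀ A : Finset ℕ, m ≤ A.card → ∀ f : Finset ℕ → Fin r,
        ∃ B, B ⊆ A ∧ B.card = t ∧ ∃ c : ℕ → Fin r,
          ∀ C, C ⊆ B → ∀ hC : C.Nonempty, C.card = n + 1 → f C = c (C.min' hC) := by
      intro t
      induction t with
      | zero =>
        refine ⟨0, fun A _ f => ⟨∅, by simp, by simp, fun _ => ⟨0, hr⟩, ?_⟩⟩
        intro C hC hCne _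
        exact absurd (Finset.subset_empty.mp hC) hCne.ne_empty
      | succ t IHt =>
        obtain ⟨mt, hmt⟩ := IHt
        obtain ⟨M, hM⟩ := IH mt
        refine ⟨M + 1, fun A hA f => ?_⟩
        have hAne : A.Nonempty := by rw [← Finset.card_pos]; omega
        set a := A.min' hAne with ha
        have haA : a ∈ A := A.min'_mem hAne
        have hcard : M ≤ (A.erase a).card := by
          rw [Finset.card_erase_of_mem haA]; omega
        obtain ⟨B', hB'sub, hB'card, c_a, hc_a⟩ :=
          hM (A.erase a) hcard (fun C => f (insert a C))
        obtain ⟨B'', hB''sub, hB''card, c', hc'⟩ := hmt B' hB'card f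
        have hB''A : B'' ⊆ A.erase a := fun x hx => hB'sub (hB''sub hx)
        have haB'' : a ∉ B'' := fun h => (Finset.mem_erase.mp (hB''A h)).1 rfl
        refine ⟨insert a B'', ?_, ?_, fun x => if x = a then c_a else c' x, ?_⟩
        · intro x hx
          rcases Finset.mem_insert.mp hx with h | h
          · exact h ▸ haA
          · exact Finset.erase_subset _ _ (hB''A h)
        · rw [Finset.card_insert_of_notMem haB'', hB''card]
        · intro C hC hCne hCcard
          by_cases haC : a ∈ C
          · have hmin : C.min' hCne = a := by
              apply le_antisymm (Finset.min'_le _ _ haC)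
              apply Finset.le_min'
              intro y hy
              refine A.min'_le y ?_
              rcases Finset.mem_insert.mp (hC hy) with h | h
              · exact h ▸ haA
              · exact Finset.erase_subset _ _ (hB''A h)
            rw [hmin]; simp only [if_pos]
            have hsub : C.erase a ⊆ B' := by
              intro x hx
              obtain ⟨hxa, hxC⟩ := Finset.mem_erase.mp hx
              rcases Finset.mem_insert.mp (hC hxC) with h | h
              · exact absurd h hxa
              · exact hB''sub h
            have hcd : (C.erase a).card = n := by
              rw [Finset.card_erase_of_mem haC, hCcard]; omega
            have := hc_a (C.erase a) hsub hcd
            simpa [Finset.insert_erase haC] using this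
          · have hsub : C ⊆ B'' := by
              intro x hx
              rcases Finset.mem_insert.mp (hC hx) with h | h
              · exact absurd (h ▸ hx) haC
              · exact h
            have hmem : C.min' hCne ∈ B'' := hsub (C.min'_mem hCne)
            have hne : C.min' hCne ≠ a := fun h => haB'' (h ▸ hmem)
            simp only [if_neg hne]
            exact hc' C hsub hCne hCcard
    -- pigeonhole on minima
    intro s
    obtain ⟨m, hm⟩ := ext (r * (s - 1) + 1)
    refine ⟨m, fun A hA f => ?_⟩
    obtain ⟨B, hBsub, hBcard, c, hc⟩ := hm A hA f
    have hpig : ∃ y ∈ (Finset.univ : Finset (Fin r)),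
        s - 1 < (B.filter fun x => c x = y).card := by
      apply Finset.exists_lt_card_fiber_of_mul_lt_card_of_maps_to
      · intro x _; exact Finset.mem_univ _
      · rw [Finset.card_univ, Fintype.card_fin, hBcard]; omega
    obtain ⟨c0, _, hc0⟩ := hpig
    refine ⟨B.filter fun x => c x = c0, (Finset.filter_subset _ _).trans hBsub,
      by omega, c0, ?_⟩
    intro C hC hCcard
    have hCne : C.Nonempty := by rw [← Finset.card_pos]; omega
    rw [hc C (hC.trans (Finset.filter_subset _ _)) hCne hCcard]
    have hmem : C.min' hCne ∈ B.filter fun x => c x = c0 := hC (C.min'_mem hCne)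
    exact (Finset.mem_filter.mp hmem).2

/-- Simultaneous version: one set `B` works for all cardinalities `≤ k`. -/
private lemma simN (r : ℕ) (hr : 0 < r) :
    ∀ k s : ℕ, ∃ m : ℕ, ∀ A : Finset ℕ, m ≤ A.card → ∀ f : Finset ℕ → Fin r,
      ∃ B, B ⊆ A ∧ s ≤ B.card ∧ ∃ φ : ℕ → Fin r,
        ∀ C ⊆ B, 0 < C.card → C.card ≤ k → f C = φ C.card := by
  intro k
  induction k with
  | zero =>
    intro s
    refine ⟨s, fun A hA f => ⟨A, Finset.Subset.refl A, hA, fun _ => ⟨0, hr⟩, ?_⟩⟩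
    intro C _ h1 h2
    exact absurd (h1.trans_le h2) (lt_irrefl 0)
  | succ k IHk =>
    intro s
    obtain ⟨m1, hm1⟩ := IHk s
    obtain ⟨m2, hm2⟩ := ramseyN r hr (k + 1) m1
    refine ⟨m2, fun A hA f => ?_⟩
    obtain ⟨B1, hB1sub, hB1card, c, hc⟩ := hm2 A hA f
    obtain ⟨B, hBsub, hBcard, φ, hφ⟩ := hm1 B1 hB1card f
    refine ⟨B, hBsub.trans hB1sub, hBcard, fun t => if t = k + 1 then c else φ t, ?_⟩
    intro C hC h1 h2
    by_cases hck : C.card = k + 1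
    · rw [hck]; simp only [if_pos]
      exact hc C (hC.trans hBsub) hck
    · simp only [if_neg hck]
      exact hφ C hC h1 (by omega)

/-- Given `k ≤ s` and `r`, there is an `m` such that whenever `A` has `m`
elements and the nonempty subsets of `A` are partitioned (covered) by `r`
cells, there are `φ : {1,…,k} → {1,…,r}` and `B ⊆ A` with `#B = s` such that
every nonempty `C ⊆ B` with `#C ≤ k` lies in the cell `φ(#C)`. -/
theorem ramsey_size_coloring (k r s : ℕ) (hk : 0 < k) (hr : 0 < r) (hs : 0 < s)
    (hks : k ≤ s) :
    ∃ m : ℕ, 0 < m ∧ ∀ (α : Type) [DecidableEq α] (A : Finset α),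
      A.card = m → ∀ 𝓕 : Fin r → Set (Finset α),
      (∀ C : Finset α, C ⊆ A → C.Nonempty → ∃ i, C ∈ 𝓕 i) →
      ∃ φ : ℕ → Fin r, ∃ B : Finset α, B ⊆ A ∧ B.card = s ∧
        ∀ C : Finset α, C ⊆ B → C.Nonempty → C.card ≤ k → C ∈ 𝓕 (φ C.card) := by
  classical
  obtain ⟨m0, hm0⟩ := simN r hr k s
  refine ⟨max m0 1, by omega, ?_⟩
  intro α _ A hAcard 𝓕 hcover
  -- choice coloring
  set f : Finset α → Fin r := fun C =>
    if h : ∃ i, C ∈ 𝓕 i then h.choose else ⟨0, hr⟩ with hf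
  have hfspec : ∀ C : Finset α, C ⊆ A → C.Nonempty → C ∈ 𝓕 (f C) := by
    intro C hC hCne
    have h := hcover C hC hCne
    simp only [hf, dif_pos h]
    exact h.choose_spec
  -- transfer to ℕ
  have hApos : 0 < A.card := by omega
  obtain ⟨a0, ha0⟩ := Finset.card_pos.mp hApos
  set g : ℕ → α := fun i => if h : i < A.card then (A.equivFin.symm ⟨i, h⟩ : α) else a0
    with hg
  have hginj : Set.InjOn g ↑(Finset.range A.card) := by
    intro i hi j hj hij
    simp only [Finset.coe_range, Set.mem_Iio] at hi hj
    simp only [hg, dif_pos hi, dif_pos hj] at hij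
    have := A.equivFin.symm.injective (Subtype.coe_injective hij)
    exact congrArg Fin.val this
  have hgmem : ∀ i < A.card, g i ∈ A := by
    intro i hi
    simp only [hg, dif_pos hi]
    exact (A.equivFin.symm ⟨i, hi⟩).2
  obtain ⟨B', hB'sub, hB'card, φ, hφ⟩ := hm0 (Finset.range A.card)
    (by rw [Finset.card_range, hAcard]; omega) (fun D => f (D.image g))
  have hginjB : ∀ D : Finset ℕ, D ⊆ Finset.range A.card →
      (D.image g).card = D.card := by
    intro D hD
    exact Finset.card_image_of_injOn (hginj.mono (by exact_mod_cast hD))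
  -- B'.image g has card ≥ s; shrink to exactly s
  have hBig : (B'.image g).card = B'.card := hginjB B' hB'sub
  obtain ⟨B, hBsub, hBcard⟩ := Finset.exists_subset_card_eq (show s ≤ (B'.image g).card by omega)
  have hBA : B ⊆ A := by
    intro x hx
    obtain ⟨i, hi, rfl⟩ := Finset.mem_image.mp (hBsub hx)
    exact hgmem i (Finset.mem_range.mp (hB'sub hi))
  refine ⟨φ, B, hBA, hBcard, ?_⟩
  intro C hC hCne hCk
  obtain ⟨D, hDsub, hDim⟩ := Finset.subset_image_iff.mp (hC.trans hBsub)
  have hDrange : D ⊆ Finset.range A.card := hDsub.trans hB'sub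
  have hDcard : D.card = C.card := by rw [← hDim]; exact (hginjB D hDrange).symm
  have hDne : 0 < D.card := by
    rw [hDcard]; exact Finset.card_pos.mpr hCne
  have := hφ D hDsub hDne (by omega)
  rw [hDim, hDcard] at this
  have hmem := hfspec C (hC.trans hBA) hCne
  rwa [this] at hmem
end

section
/- Let (S,+) be a (not necessarily commutative) semigroup. The collection of all finite FS-big subsets of S is partition regular: if A ⊆ S is finite FS-big and A = B_1 ∪ … ∪ B_r for some positive integer r, then some B_i is finite FS-big. -/
/-- The sum of `x t` for `t ∈ F`, taken in increasing order of indices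
(junk value `x 0` if `F` is empty). -/
def fsum {S : Type*} [AddSemigroup S] (x : ℕ → S) (F : Finset ℕ) : S :=
  match F.sort (· ≤ ·) with
  | [] => x 0
  | a :: l => l.foldl (fun s t => s + x t) (x a)

section Aux
variable {S : Type*} [AddSemigroup S]

lemma fsum_of_sort {x : ℕ → S} {F : Finset ℕ} {a : ℕ} {l : List ℕ}
    (h : F.sort (· ≤ ·) = a :: l) :
    fsum x F = l.foldl (fun s t => s + x t) (x a) := by
  unfold fsum; rw [h]

lemma exists_sort_cons {F : Finset ℕ} (h : F.Nonempty) :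
    ∃ a l, F.sort (· ≤ ·) = a :: l := by
  rcases e : F.sort (· ≤ ·) with _ | ⟨a, l⟩
  · exfalso
    have := Finset.length_sort (α := ℕ) (· ≤ ·) (s := F)
    rw [e] at this
    have hc := Finset.card_pos.mpr h
    simp at this
    omega
  · exact ⟨a, l, rfl⟩

lemma foldl_shift (x : ℕ → S) (l : List ℕ) (c d : S) :
    l.foldl (fun s t => s + x t) (c + d) = c + l.foldl (fun s t => s + x t) d := by
  induction l generalizing d with
  | nil => rfl
  | cons t l ih => simpa [add_assoc] using ih (d + x t)

lemma fsum_singleton (x : ℕ → S) (a : ℕ) : fsum x {a} = x a := by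
  have : ({a} : Finset ℕ).sort (· ≤ ·) = [a] := Finset.sort_singleton (· ≤ ·) a
  rw [fsum_of_sort this]; rfl

lemma sort_union {D E : Finset ℕ} (hlt : ∀ s ∈ D, ∀ t ∈ E, s < t) :
    (D ∪ E).sort (· ≤ ·) = D.sort (· ≤ ·) ++ E.sort (· ≤ ·) := by
  have hdisj : Disjoint D E := by
    rw [Finset.disjoint_left]
    intro a haD haE
    exact absurd (hlt a haD a haE) (lt_irrefl a)
  have hval : (D ∪ E).1 = D.1 + E.1 := by
    rw [← Finset.disjUnion_eq_union D E hdisj]; rfl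
  have hperm : List.Perm ((D ∪ E).sort (· ≤ ·)) (D.sort (· ≤ ·) ++ E.sort (· ≤ ·)) := by
    have hm : (((D ∪ E).sort (· ≤ ·) : List ℕ) : Multiset ℕ)
        = ((D.sort (· ≤ ·) ++ E.sort (· ≤ ·) : List ℕ) : Multiset ℕ) := by
      rw [← Multiset.coe_add, Finset.sort_eq, Finset.sort_eq, Finset.sort_eq, hval]
    exact Quotient.exact hm
  refine List.Perm.eq_of_pairwise' (Finset.pairwise_sort _ _) ?_ hperm
  rw [List.pairwise_append]
  refine ⟨Finset.pairwise_sort _ _, Finset.pairwise_sort _ _, ?_⟩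
  intro a ha b hb
  exact (hlt a (by simpa using (Finset.mem_sort _).1 ha) b
    (by simpa using (Finset.mem_sort _).1 hb)).le

lemma fsum_union (x : ℕ → S) {D E : Finset ℕ} (hD : D.Nonempty) (hE : E.Nonempty)
    (hlt : ∀ s ∈ D, ∀ t ∈ E, s < t) :
    fsum x (D ∪ E) = fsum x D + fsum x E := by
  obtain ⟨a, l1, h1⟩ := exists_sort_cons hD
  obtain ⟨c, l2, h2⟩ := exists_sort_cons hE
  have h3 : (D ∪ E).sort (· ≤ ·) = a :: (l1 ++ c :: l2) := by
    rw [sort_union hlt, h1, h2]; rfl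
  rw [fsum_of_sort h3, fsum_of_sort h1, fsum_of_sort h2]
  rw [List.foldl_append, List.foldl_cons, foldl_shift]

end Aux


/-! ### The ordered-union semigroup on `Finset ℕ` -/

def fuAdd (D E : Finset ℕ) : Finset ℕ :=
  if D.Nonempty ∧ E.Nonempty ∧ ∀ s ∈ D, ∀ t ∈ E, s < t then D ∪ E else ∅

lemma fuAdd_assoc (D E F : Finset ℕ) : fuAdd (fuAdd D E) F = fuAdd D (fuAdd E F) := by
  have emp1 : ∀ G : Finset ℕ, fuAdd ∅ G = ∅ := fun G => by
    rw [fuAdd, if_neg]; rintro ⟨h, -, -⟩; exact h.ne_empty rfl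
  have emp2 : ∀ G : Finset ℕ, fuAdd G ∅ = ∅ := fun G => by
    rw [fuAdd, if_neg]; rintro ⟨-, h, -⟩; exact h.ne_empty rfl
  by_cases h1 : D.Nonempty ∧ E.Nonempty ∧ ∀ s ∈ D, ∀ t ∈ E, s < t
  · have e1 : fuAdd D E = D ∪ E := by rw [fuAdd, if_pos h1]
    by_cases h2 : E.Nonempty ∧ F.Nonempty ∧ ∀ s ∈ E, ∀ t ∈ F, s < t
    · have e2 : fuAdd E F = E ∪ F := by rw [fuAdd, if_pos h2]
      obtain ⟨e, he⟩ := h1.2.1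
      have c1 : (D ∪ E).Nonempty ∧ F.Nonempty ∧ ∀ s ∈ D ∪ E, ∀ t ∈ F, s < t := by
        refine ⟨h1.1.mono Finset.subset_union_left, h2.2.1, ?_⟩
        intro s hs t ht
        rcases Finset.mem_union.1 hs with hs | hs
        · exact lt_trans (h1.2.2 s hs e he) (h2.2.2 e he t ht)
        · exact h2.2.2 s hs t ht
      have c2 : D.Nonempty ∧ (E ∪ F).Nonempty ∧ ∀ s ∈ D, ∀ t ∈ E ∪ F, s < t := by
        refine ⟨h1.1, h2.1.mono Finset.subset_union_left, ?_⟩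
        intro s hs t ht
        rcases Finset.mem_union.1 ht with ht | ht
        · exact h1.2.2 s hs t ht
        · exact lt_trans (h1.2.2 s hs e he) (h2.2.2 e he t ht)
      rw [e1, e2, fuAdd, if_pos c1, fuAdd, if_pos c2, Finset.union_assoc]
    · have e2 : fuAdd E F = ∅ := by rw [fuAdd, if_neg h2]
      rw [e1, e2, emp2]
      have c1 : ¬((D ∪ E).Nonempty ∧ F.Nonempty ∧ ∀ s ∈ D ∪ E, ∀ t ∈ F, s < t) := by
        rintro ⟨-, hF, hlt⟩
        exact h2 ⟨h1.2.1, hF, fun s hs t ht => hlt s (Finset.mem_union_right D hs) t ht⟩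
      rw [fuAdd, if_neg c1]
  · have e1 : fuAdd D E = ∅ := by rw [fuAdd, if_neg h1]
    rw [e1, emp1]
    by_cases h2 : E.Nonempty ∧ F.Nonempty ∧ ∀ s ∈ E, ∀ t ∈ F, s < t
    · have e2 : fuAdd E F = E ∪ F := by rw [fuAdd, if_pos h2]
      rw [e2]
      have c2 : ¬(D.Nonempty ∧ (E ∪ F).Nonempty ∧ ∀ s ∈ D, ∀ t ∈ E ∪ F, s < t) := by
        rintro ⟨hD, -, hlt⟩
        exact h1 ⟨hD, h2.1, fun s hs t ht => hlt s hs t (Finset.mem_union_left F ht)⟩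
      rw [fuAdd, if_neg c2]
    · have e2 : fuAdd E F = ∅ := by rw [fuAdd, if_neg h2]
      rw [e2, emp2]

instance fuAddSemigroup : AddSemigroup (Finset ℕ) where
  add := fuAdd
  add_assoc := fuAdd_assoc

lemma fu_add_def (D E : Finset ℕ) : D + E = fuAdd D E := rfl

lemma fu_eq_union_of_nonempty {D E : Finset ℕ} (h : (D + E).Nonempty) :
    D + E = D ∪ E ∧ ∀ s ∈ D, ∀ t ∈ E, s < t := by
  by_cases hc : D.Nonempty ∧ E.Nonempty ∧ ∀ s ∈ D, ∀ t ∈ E, s < t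
  · exact ⟨by rw [fu_add_def, fuAdd, if_pos hc], hc.2.2⟩
  · rw [fu_add_def, fuAdd, if_neg hc] at h
    exact absurd rfl h.ne_empty

/-! ### Finite sums belong to FS -/

open Hindman in
lemma foldl_mem_FS {M : Type*} [AddSemigroup M] (x : Stream' M) :
    ∀ (l : List ℕ) (a : ℕ), List.Chain (· < ·) a l →
      l.foldl (fun s t => s + x.get t) (x.get a) ∈ FS (x.drop a) := by
  intro l
  induction l with
  | nil =>
    intro a _
    have h := FS.head (x.drop a)
    rwa [Stream'.head_drop] at h
  | cons t l ih =>
    intro a hchain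
    rcases List.chain_cons.1 hchain with ⟨hat, hc⟩
    have hz : l.foldl (fun s t => s + x.get t) (x.get t) ∈ FS (x.drop t) := ih t hc
    have hsub : FS (x.drop t) ⊆ FS ((x.drop a).tail) := by
      rw [Stream'.tail_eq_drop, Stream'.drop_drop, Nat.add_comm a 1]
      have : x.drop t = (x.drop (1 + a)).drop (t - (1 + a)) := by
        rw [Stream'.drop_drop]
        have ht' : 1 + a + (t - (1 + a)) = t := by omega
        rw [ht']
      rw [this]
      exact FS_iter_tail_sub_FS _ _
    have hcons := FS.cons (x.drop a) _ (hsub hz)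
    rw [Stream'.head_drop] at hcons
    simpa [foldl_shift] using hcons

open Hindman in
lemma fsum_mem_FS {M : Type*} [AddSemigroup M] (x : Stream' M) {F : Finset ℕ}
    (hF : F.Nonempty) : fsum x.get F ∈ FS x := by
  obtain ⟨a, l, hsort⟩ := exists_sort_cons hF
  have hsorted := (Finset.sortedLT_sort F).pairwise
  rw [hsort] at hsorted
  have hchain : List.Chain (· < ·) a l := List.isChain_iff_pairwise.2 hsorted
  rw [fsum_of_sort hsort]
  exact FS_iter_tail_sub_FS x a (foldl_mem_FS x l a hchain)

open Hindman in
lemma FS_singleton_stream {x : Stream' (Finset ℕ)} {g : ℕ → ℕ} (hg : StrictMono g)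
    (hx : ∀ n, x.get n = {g n}) :
    ∀ m ∈ FS x, m.Nonempty ∧ ∀ t ∈ m, t ∈ Set.range g := by
  intro m hm
  induction hm generalizing g with
  | head' a =>
    have : a.head = {g 0} := hx 0
    rw [this]
    exact ⟨Finset.singleton_nonempty _, fun t ht => ⟨0, (Finset.mem_singleton.1 ht).symm⟩⟩
  | tail' a m h ih =>
    have := ih (g := fun n => g (n + 1))
      (hg.comp fun n m hnm => Nat.succ_lt_succ hnm)
      (fun n => by rw [Stream'.get_tail]; exact hx (n + 1))
    exact ⟨this.1, fun t ht => by obtain ⟨j, hj⟩ := this.2 t ht; exact ⟨j + 1, hj⟩⟩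
  | cons' a m h ih =>
    have hm' := ih (g := fun n => g (n + 1))
      (hg.comp fun n m hnm => Nat.succ_lt_succ hnm)
      (fun n => by rw [Stream'.get_tail]; exact hx (n + 1))
    have hhead : a.head = {g 0} := hx 0
    have hcond : ({g 0} : Finset ℕ).Nonempty ∧ m.Nonempty ∧
        ∀ s ∈ ({g 0} : Finset ℕ), ∀ t ∈ m, s < t := by
      refine ⟨Finset.singleton_nonempty _, hm'.1, ?_⟩
      intro s hs t ht
      rw [Finset.mem_singleton.1 hs]
      obtain ⟨j, hj⟩ := hm'.2 t ht
      rw [← hj]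
      exact hg (Nat.succ_pos j)
    have : a.head + m = {g 0} ∪ m := by
      rw [hhead, fu_add_def, fuAdd, if_pos hcond]
    rw [this]
    constructor
    · exact (Finset.singleton_nonempty _).mono Finset.subset_union_left
    · intro t ht
      rcases Finset.mem_union.1 ht with ht | ht
      · exact ⟨0, (Finset.mem_singleton.1 ht).symm⟩
      · obtain ⟨j, hj⟩ := hm'.2 t ht
        exact ⟨j + 1, hj⟩

/-- `A ⊆ S` is `k`-summable: there is a `k`-term sequence (indexed by
`{1,…,k}`) satisfying uniqueness of finite sums all of whose finite sums
(taken in increasing order of indices) lie in `A`. -/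
def KSummableS {S : Type*} [AddSemigroup S] (A : Set S) (k : ℕ) : Prop :=
  ∃ x : ℕ → S,
    (∀ F H : Finset ℕ, F ⊆ Finset.Icc 1 k → H ⊆ Finset.Icc 1 k →
      F.Nonempty → H.Nonempty → fsum x F = fsum x H → F = H) ∧
    ∀ F ⊆ Finset.Icc 1 k, F.Nonempty → fsum x F ∈ A

/-- `A ⊆ S` is finite FS-big if it is `k`-summable for every positive `k`. -/
def FiniteFSBig {S : Type*} [AddSemigroup S] (A : Set S) : Prop :=
  ∀ k : ℕ, 0 < k → KSummableS A k

/-- In any semigroup, the collection of finite FS-big sets is partition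
regular. -/
theorem finiteFSBig_partition_regular {S : Type*} [AddSemigroup S] (A : Set S)
    (r : ℕ) (hr : 0 < r) (B : Fin r → Set S) (hA : FiniteFSBig A)
    (hpart : A = ⋃ i, B i) :
    ∃ i, FiniteFSBig (B i) := by

  classical
  have hst : ∀ n : ℕ, KSummableS A (n + 1) := fun n => hA (n + 1) n.succ_pos
  choose X hXuniq hXmem using hst
  have i₀ : Fin r := ⟨0, hr⟩
  -- for each `n`, color a (suitable) finite set `F` by the cell containing `fsum (X n) F`
  have hcolex : ∀ (n : ℕ) (F : Finset ℕ), ∃ c : Fin r,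
      F ⊆ Finset.Icc 1 (n + 1) → F.Nonempty → fsum (X n) F ∈ B c := by
    intro n F
    by_cases h : F ⊆ Finset.Icc 1 (n + 1) ∧ F.Nonempty
    · have hmem : fsum (X n) F ∈ A := hXmem n F h.1 h.2
      rw [hpart, Set.mem_iUnion] at hmem
      obtain ⟨j, hj⟩ := hmem
      exact ⟨j, fun _ _ => hj⟩
    · exact ⟨i₀, fun h1 h2 => absurd ⟨h1, h2⟩ h⟩
  choose col hcol using hcolex
  -- the limit coloring along the hyperfilter
  have hchi : ∀ F : Finset ℕ, ∃ c : Fin r,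
      {n | col n F = c} ∈ Filter.hyperfilter ℕ := by
    intro F
    by_contra hcon
    push_neg at hcon
    have hcompl : ∀ c : Fin r, {n | col n F = c}ᶜ ∈ Filter.hyperfilter ℕ := fun c =>
      (Ultrafilter.compl_mem_iff_notMem).2 (hcon c)
    have hI : (⋂ c : Fin r, {n | col n F = c}ᶜ) ∈ Filter.hyperfilter ℕ :=
      Filter.iInter_mem.2 hcompl
    obtain ⟨n, hn⟩ := Ultrafilter.nonempty_of_mem hI
    simp only [Set.mem_iInter, Set.mem_compl_iff, Set.mem_setOf_eq] at hn
    exact hn (col n F) rfl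
  choose χ hχ using hchi
  -- Hindman's theorem in the ordered-union semigroup
  have hcov : Hindman.FS (fun n => ({n + 1} : Finset ℕ) : Stream' (Finset ℕ)) ⊆
      ⋃₀ (Set.range fun i : Fin r =>
        {m : Finset ℕ | m.Nonempty ∧ (∀ t ∈ m, 1 ≤ t) ∧ χ m = i}) := by
    intro m hm
    have h := FS_singleton_stream (x := (fun n => ({n + 1} : Finset ℕ) : Stream' (Finset ℕ)))
      (g := fun n => n + 1) (fun p q hpq => Nat.succ_lt_succ hpq) (fun n => rfl) m hm
    refine ⟨_, ⟨χ m, rfl⟩, h.1, ?_, rfl⟩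
    intro t ht
    obtain ⟨j, hj⟩ := h.2 t ht
    subst hj
    exact Nat.succ_le_succ j.zero_le
  obtain ⟨c, hc, b, hb⟩ := Hindman.FS_partition_regular _ _ (Set.finite_range _) hcov
  obtain ⟨i, rfl⟩ := hc
  refine ⟨i, ?_⟩
  intro k hk
  -- basic facts about the blocks `b`
  have hGood : ∀ F : Finset ℕ, F.Nonempty →
      (fsum b.get F).Nonempty ∧ (∀ t ∈ fsum b.get F, 1 ≤ t) ∧ χ (fsum b.get F) = i :=
    fun F hF => hb (fsum_mem_FS b hF)
  have hGsingle : ∀ j : ℕ, fsum b.get {j} = b.get j := fun j => fsum_singleton b.get j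
  have hblockne : ∀ j : ℕ, (b.get j).Nonempty := by
    intro j
    rw [← hGsingle j]
    exact (hGood {j} (Finset.singleton_nonempty j)).1
  have hstep : ∀ F : Finset ℕ, 2 ≤ F.card →
      ∃ (m : ℕ) (F' : Finset ℕ), F'.Nonempty ∧ F'.card + 1 = F.card ∧ m ∈ F ∧
        (∀ s ∈ F', s < m) ∧ F' ∪ {m} = F ∧
        fsum b.get F = fsum b.get F' ∪ b.get m ∧
        (∀ s ∈ fsum b.get F', ∀ t ∈ b.get m, s < t) := by
    intro F hcard
    have hne : F.Nonempty := Finset.card_pos.mp (by omega)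
    obtain ⟨m, hmF, hmax⟩ : ∃ m ∈ F, ∀ s ∈ F, s ≤ m := ⟨F.max' hne, F.max'_mem hne,
      fun s hs => F.le_max' s hs⟩
    refine ⟨m, F.erase m, ?_, ?_, hmF, ?_, ?_, ?_, ?_⟩
    · rw [← Finset.card_pos, Finset.card_erase_of_mem hmF]; omega
    · rw [Finset.card_erase_of_mem hmF]; omega
    · exact fun s hs => lt_of_le_of_ne (hmax s (Finset.mem_of_mem_erase hs))
        (Finset.ne_of_mem_erase hs)
    · rw [Finset.union_comm, ← Finset.insert_eq, Finset.insert_erase hmF]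
    all_goals {
      have hF'ne : (F.erase m).Nonempty := by
        rw [← Finset.card_pos, Finset.card_erase_of_mem hmF]; omega
      have hlt : ∀ s ∈ F.erase m, s < m := fun s hs =>
        lt_of_le_of_ne (hmax s (Finset.mem_of_mem_erase hs)) (Finset.ne_of_mem_erase hs)
      have hunion : F.erase m ∪ {m} = F := by
        rw [Finset.union_comm, ← Finset.insert_eq, Finset.insert_erase hmF]
      have hGF : fsum b.get F = fsum b.get (F.erase m) + b.get m := by
        conv_lhs => rw [← hunion]
        rw [fsum_union b.get hF'ne (Finset.singleton_nonempty m)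
          (fun s hs t ht => by rw [Finset.mem_singleton.1 ht]; exact hlt s hs),
          fsum_singleton]
      have hGne : (fsum b.get (F.erase m) + b.get m).Nonempty := by
        rw [← hGF]; exact (hGood F hne).1
      obtain ⟨he, hord⟩ := fu_eq_union_of_nonempty hGne
      first
        | (rw [hGF, he])
        | (exact hord)
    }
  have hbiU : ∀ (p : ℕ) (F : Finset ℕ), F.card ≤ p → F.Nonempty →
      fsum b.get F = F.biUnion b.get := by
    intro p
    induction p with
    | zero => exact fun F hcard hne => absurd (Finset.card_pos.2 hne) (by omega)
    | succ p ih =>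
      intro F hcard hne
      by_cases h1 : F.card ≤ 1
      · have h2 : F.card = 1 := le_antisymm h1 (Finset.card_pos.2 hne)
        obtain ⟨j, rfl⟩ := Finset.card_eq_one.1 h2
        rw [hGsingle, Finset.singleton_biUnion]
      · obtain ⟨m, F', hF'ne, hF'card, hmF, hlt, hunion, hGeq, hord⟩ := hstep F (by omega)
        have hins : insert m F' = F := by
          rw [Finset.insert_eq, Finset.union_comm]; exact hunion
        rw [hGeq, ih F' (by omega) hF'ne, ← hins, Finset.biUnion_insert,
          Finset.union_comm]
  have horder : ∀ s t : ℕ, s < t → ∀ u ∈ b.get s, ∀ v ∈ b.get t, u < v := by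
    intro s t hst
    have hpair : fsum b.get {s, t} = b.get s + b.get t := by
      rw [Finset.insert_eq, fsum_union b.get (Finset.singleton_nonempty s)
        (Finset.singleton_nonempty t) (fun u hu v hv => by
          rw [Finset.mem_singleton.1 hu, Finset.mem_singleton.1 hv]; exact hst),
        fsum_singleton, fsum_singleton]
    have hne : (b.get s + b.get t).Nonempty := by
      rw [← hpair]
      exact (hGood _ ⟨s, Finset.mem_insert_self s {t}⟩).1
    exact (fu_eq_union_of_nonempty hne).2
  have hinj : ∀ F H : Finset ℕ, F.Nonempty → H.Nonempty →
      fsum b.get F = fsum b.get H → F = H := by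
    suffices hss : ∀ F H : Finset ℕ, F.Nonempty → H.Nonempty →
        fsum b.get F = fsum b.get H → F ⊆ H by
      exact fun F H h1 h2 he => Finset.Subset.antisymm
        (hss F H h1 h2 he) (hss H F h2 h1 he.symm)
    intro F H h1 h2 he t ht
    obtain ⟨u, hu⟩ := hblockne t
    have huF : u ∈ F.biUnion b.get := Finset.mem_biUnion.2 ⟨t, ht, hu⟩
    rw [← hbiU F.card F le_rfl h1, he, hbiU H.card H le_rfl h2] at huF
    obtain ⟨s, hsH, hus⟩ := Finset.mem_biUnion.1 huF
    rcases lt_trichotomy s t with h | h | h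
    · exact absurd (horder s t h u hus u hu) (lt_irrefl u)
    · rwa [← h]
    · exact absurd (horder t s h u hu u hus) (lt_irrefl u)
  -- choose a good `n`
  have hTne : (Finset.Icc 1 k).Nonempty := ⟨1, Finset.mem_Icc.2 ⟨le_rfl, hk⟩⟩
  obtain ⟨N, hN⟩ : ∃ N : ℕ, ∀ u ∈ fsum b.get (Finset.Icc 1 k), u ≤ N :=
    ⟨(fsum b.get (Finset.Icc 1 k)).max' (hGood _ hTne).1,
      fun u hu => Finset.le_max' _ u hu⟩
  have hset1 : {n : ℕ | N ≤ n} ∈ Filter.hyperfilter ℕ := by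
    have h1 : ({n : ℕ | N ≤ n}ᶜ : Set ℕ).Finite := by
      refine (Set.finite_Iio N).subset ?_
      intro n hn
      simp only [Set.mem_compl_iff, Set.mem_setOf_eq, not_le] at hn
      exact Set.mem_Iio.2 hn
    have := Filter.compl_mem_hyperfilter_of_finite h1
    rwa [compl_compl] at this
  have hset2 : (⋂ F : {F // F ∈ (Finset.Icc 1 k).powerset},
      {n : ℕ | (F : Finset ℕ).Nonempty → col n (fsum b.get F) = i}) ∈
      Filter.hyperfilter ℕ := by
    refine Filter.iInter_mem.2 ?_
    rintro ⟨F, hF⟩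
    by_cases hne : F.Nonempty
    · have hchiF : χ (fsum b.get F) = i := (hGood F hne).2.2
      have hh := hχ (fsum b.get F)
      rw [hchiF] at hh
      exact Filter.mem_of_superset hh (fun n hn _ => hn)
    · exact Filter.mem_of_superset Filter.univ_mem (fun n _ hcon => absurd hcon hne)
  obtain ⟨n, hn1, hn2⟩ := Ultrafilter.nonempty_of_mem
    (Filter.inter_mem hset1 hset2)
  rw [Set.mem_setOf_eq] at hn1
  -- the sets `fsum b.get F` live in `Icc 1 (n+1)`
  have hIccsub : ∀ F : Finset ℕ, F ⊆ Finset.Icc 1 k → F.Nonempty →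
      fsum b.get F ⊆ Finset.Icc 1 (n + 1) := by
    intro F hsub hne u hu
    have h1 : 1 ≤ u := (hGood F hne).2.1 u hu
    have h2 : u ∈ fsum b.get (Finset.Icc 1 k) := by
      rw [hbiU _ _ le_rfl hTne]
      rw [hbiU F.card F le_rfl hne] at hu
      exact Finset.biUnion_subset_biUnion_of_subset_left b.get hsub hu
    have h3 : u ≤ N := hN u h2
    rw [Finset.mem_Icc]
    omega
  have hmemB : ∀ F : Finset ℕ, F ⊆ Finset.Icc 1 k → F.Nonempty →
      fsum (X n) (fsum b.get F) ∈ B i := by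
    intro F hsub hne
    have hcoln : col n (fsum b.get F) = i :=
      Set.mem_iInter.1 hn2 ⟨F, Finset.mem_powerset.2 hsub⟩ hne
    have := hcol n (fsum b.get F) (hIccsub F hsub hne) (hGood F hne).1
    rwa [hcoln] at this
  -- the composed sums
  have hC2 : ∀ (p : ℕ) (F : Finset ℕ), F.card ≤ p → F.Nonempty →
      fsum (fun j => fsum (X n) (b.get j)) F = fsum (X n) (fsum b.get F) := by
    intro p
    induction p with
    | zero => exact fun F hcard hne => absurd (Finset.card_pos.2 hne) (by omega)
    | succ p ih =>
      intro F hcard hne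
      by_cases h1 : F.card ≤ 1
      · have h2 : F.card = 1 := le_antisymm h1 (Finset.card_pos.2 hne)
        obtain ⟨j, rfl⟩ := Finset.card_eq_one.1 h2
        rw [fsum_singleton, hGsingle]
      · obtain ⟨m, F', hF'ne, hF'card, hmF, hlt, hunion, hGeq, hord⟩ := hstep F (by omega)
        have hL : fsum (fun j => fsum (X n) (b.get j)) F =
            fsum (fun j => fsum (X n) (b.get j)) F' + fsum (X n) (b.get m) := by
          conv_lhs => rw [← hunion]
          rw [fsum_union _ hF'ne (Finset.singleton_nonempty m)
            (fun s hs t ht => by rw [Finset.mem_singleton.1 ht]; exact hlt s hs),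
            fsum_singleton]
        rw [hL, hGeq, fsum_union (X n) (hGood F' hF'ne).1 (hblockne m) hord,
          ih F' (by omega) hF'ne]
  -- conclusion
  refine ⟨fun j => fsum (X n) (b.get j), ?_, ?_⟩
  · intro F H hFsub hHsub hFne hHne heq
    rw [hC2 F.card F le_rfl hFne, hC2 H.card H le_rfl hHne] at heq
    have hGeq := hXuniq n (fsum b.get F) (fsum b.get H) (hIccsub F hFsub hFne)
      (hIccsub H hHsub hHne) (hGood F hFne).1 (hGood H hHne).1 heq
    exact hinj F H hFne hHne hGeq
  · intro F hFsub hFne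
    rw [hC2 F.card F le_rfl hFne]
    exact hmemB F hFsub hFne
end

section
/- Let i be a nonnegative integer and let k and r be positive integers with r odd and r < 2^{k−1}. Then the number of 1's in the binary expansion of r·2^i·(2^k − 1) equals k. -/
lemma sum_digits_two_mul_add (m b : ℕ) (hb : b < 2) :
    (Nat.digits 2 (2 * m + b)).sum = b + (Nat.digits 2 m).sum := by
  rcases Nat.eq_zero_or_pos (2 * m + b) with h | h
  · have hm : m = 0 := by omega
    have hb0 : b = 0 := by omega
    simp [hm, hb0]
  · rw [Nat.digits_def' (by norm_num : 1 < 2) h]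
    have h1 : (2 * m + b) % 2 = b := by omega
    have h2 : (2 * m + b) / 2 = m := by omega
    rw [h1, h2, List.sum_cons]

lemma sum_digits_compl (k : ℕ) : ∀ a : ℕ, a ≤ 2 ^ k - 1 →
    (Nat.digits 2 (2 ^ k - 1 - a)).sum + (Nat.digits 2 a).sum = k := by
  induction k with
  | zero => intro a ha; interval_cases a; simp
  | succ k ih =>
    intro a ha
    have hq : a / 2 ≤ 2 ^ k - 1 := by
      have : (0:ℕ) < 2 ^ k := Nat.pow_pos (by norm_num)
      omega
    have hb : a % 2 < 2 := Nat.mod_lt _ (by norm_num)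
    have hpos : (0:ℕ) < 2 ^ k := Nat.pow_pos (by norm_num)
    have key : 2 ^ (k + 1) - 1 - a = 2 * (2 ^ k - 1 - a / 2) + (1 - a % 2) := by
      have : 2 ^ (k + 1) = 2 * 2 ^ k := by ring
      omega
    have ha' : a = 2 * (a / 2) + a % 2 := by omega
    have hA : (Nat.digits 2 a).sum = a % 2 + (Nat.digits 2 (a / 2)).sum := by
      conv_lhs => rw [ha']
      rw [sum_digits_two_mul_add _ _ hb]
    rw [key, sum_digits_two_mul_add _ _ (by omega), hA]
    have := ih (a / 2) hq
    omega

lemma sum_digits_pow_mul (i n : ℕ) :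
    (Nat.digits 2 (2 ^ i * n)).sum = (Nat.digits 2 n).sum := by
  rcases Nat.eq_zero_or_pos n with rfl | hn
  · simp
  · rw [Nat.digits_base_pow_mul (by norm_num) hn]
    simp

/-- If `r` is odd and `r < 2^(k-1)`, then the binary expansion of
`r·2^i·(2^k - 1)` has exactly `k` ones. -/
theorem binary_ones_count (i k r : ℕ) (hk : 0 < k) (hr : 0 < r) (hodd : Odd r)
    (hlt : r < 2 ^ (k - 1)) :
    (Nat.digits 2 (r * 2 ^ i * (2 ^ k - 1))).sum = k := by
  have h2k : (0:ℕ) < 2 ^ k := Nat.pow_pos (by norm_num)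
  have hkk : 2 ^ k = 2 * 2 ^ (k - 1) := by
    rw [← pow_succ']
    congr 1
    omega
  have hr2k : r < 2 ^ k := by omega
  have heq : r * 2 ^ i * (2 ^ k - 1) = 2 ^ i * (r * (2 ^ k - 1)) := by ring
  rw [heq, sum_digits_pow_mul]
  -- length of digits of 2^k - r is k
  have hlb : 2 ^ (k - 1) ≤ 2 ^ k - r := by omega
  have hub : 2 ^ k - r < 2 ^ k := by omega
  have hne : 2 ^ k - r ≠ 0 := by omega
  have hlog : Nat.log 2 (2 ^ k - r) = k - 1 :=
    Nat.log_eq_of_pow_le_of_lt_pow hlb (by omega)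
  have hlen : (Nat.digits 2 (2 ^ k - r)).length = k := by
    rw [Nat.digits_len 2 _ (by norm_num) hne, hlog]
    omega
  have hsplit : r * (2 ^ k - 1) = (2 ^ k - r) + 2 ^ k * (r - 1) := by
    zify [hr2k.le, hr, h2k, Nat.one_le_two_pow]
    ring
  have happ := Nat.digits_append_digits (b := 2) (n := 2 ^ k - r) (m := r - 1) (by norm_num)
  rw [hlen] at happ
  rw [hsplit, ← happ, List.sum_append]
  have hcompl := sum_digits_compl k (r - 1) (by omega)
  have : 2 ^ k - 1 - (r - 1) = 2 ^ k - r := by omega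
  rw [this] at hcompl
  exact hcompl
end

section
/- For every positive integer L, the set {n ∈ ℕ⁺ : t_{n+j} = t_j for all 0 ≤ j ≤ L−1} of occurrences in the Thue-Morse word of its own prefix of length L is an IP-set. (Equivalently: for every factor u of the Thue-Morse word which is a prefix of 𝕋, the set 𝕋|_u of occurrences of u is an IP-set.) -/
/-- The Thue-Morse word: `TM n` is the sum modulo 2 of the binary digits of `n`. -/
def TM (n : ℕ) : ℕ := (Nat.digits 2 n).sum % 2

/-- `A` is an IP-set: it contains all finite sums of distinct terms of some
infinite sequence of positive integers. -/
def IsIPSet (A : Set ℕ) : Prop :=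
  ∃ x : ℕ → ℕ, (∀ t, 0 < x t) ∧ ∀ F : Finset ℕ, F.Nonempty → ∑ t ∈ F, x t ∈ A

lemma digits_len_le_of_lt_pow {k j : ℕ} (hj : j < 2 ^ k) :
    (Nat.digits 2 j).length ≤ k := by
  by_contra h
  push_neg at h
  rcases Nat.eq_zero_or_pos j with rfl | hj0
  · simp at h
  have h1 : 2 ^ (Nat.digits 2 j).length ≤ 2 * j :=
    Nat.base_pow_length_digits_le 2 j (by norm_num) hj0.ne'
  have h2 : 2 ^ (k + 1) ≤ 2 ^ (Nat.digits 2 j).length :=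
    Nat.pow_le_pow_right (by norm_num) h
  have : 2 ^ k ≤ j := by
    rw [pow_succ] at h2; omega
  omega

lemma digit_sum_add (k m j : ℕ) (hm : 0 < m) (hj : j < 2 ^ k) :
    (Nat.digits 2 (j + 2 ^ k * m)).sum = (Nat.digits 2 j).sum + (Nat.digits 2 m).sum := by
  have hlen : (Nat.digits 2 j).length ≤ k := digits_len_le_of_lt_pow hj
  have h := Nat.digits_append_zeroes_append_digits
    (b := 2) (k := k - (Nat.digits 2 j).length) (m := m) (n := j) (by norm_num) hm
  rw [Nat.add_sub_cancel' hlen] at h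
  rw [← h]
  simp [List.sum_append, List.sum_replicate]

/-- digit sum of ∑_{t ∈ F} 3·4^t is even -/
lemma geom_sum_34 (a : ℕ) : ∑ t ∈ Finset.range a, 3 * 4 ^ t = 4 ^ a - 1 := by
  induction a with
  | zero => simp
  | succ n ihn =>
    rw [Finset.sum_range_succ, ihn]
    have : 1 ≤ (4:ℕ) ^ n := Nat.one_le_pow _ _ (by norm_num)
    ring_nf
    omega

lemma digit_sum_even (F : Finset ℕ) :
    (Nat.digits 2 (∑ t ∈ F, 3 * 4 ^ t)).sum % 2 = 0 := by
  induction F using Finset.induction_on_max with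
  | empty => simp
  | insert a F ha ih =>
    rw [Finset.sum_insert (fun h => lt_irrefl a (ha a h))]
    have hFsub : F ⊆ Finset.range a := fun b hb => Finset.mem_range.mpr (ha b hb)
    have hbound : ∑ t ∈ F, 3 * 4 ^ t < 2 ^ (2 * a) := by
      calc ∑ t ∈ F, 3 * 4 ^ t ≤ ∑ t ∈ Finset.range a, 3 * 4 ^ t :=
            Finset.sum_le_sum_of_subset hFsub
        _ = 4 ^ a - 1 := geom_sum_34 a
        _ < 2 ^ (2 * a) := by
            have : (4 : ℕ) ^ a = 2 ^ (2 * a) := by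
              rw [show (4:ℕ) = 2^2 by norm_num, ← pow_mul]
            have h4 : 1 ≤ (4:ℕ) ^ a := Nat.one_le_pow _ _ (by norm_num)
            omega
    have key : 3 * 4 ^ a + ∑ t ∈ F, 3 * 4 ^ t
        = (∑ t ∈ F, 3 * 4 ^ t) + 2 ^ (2 * a) * 3 := by
      have : (4 : ℕ) ^ a = 2 ^ (2 * a) := by
        rw [show (4:ℕ) = 2^2 by norm_num, ← pow_mul]
      rw [this]; ring
    rw [key, digit_sum_add (2 * a) 3 _ (by norm_num) hbound]
    have h3 : (Nat.digits 2 3).sum = 2 := by rw [Nat.digits_def' (by norm_num : (1:ℕ) < 2) (by norm_num), Nat.digits_def' (by norm_num : (1:ℕ) < 2) (by norm_num)]; norm_num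
    omega

/-- The set of positive occurrences in the Thue-Morse word of its own prefix of
length `L` is an IP-set. -/
theorem tm_prefix_occurrences_IP (L : ℕ) (hL : 0 < L) :
    IsIPSet {n : ℕ | 0 < n ∧ ∀ j < L, TM (n + j) = TM j} := by
  refine ⟨fun t => 2 ^ L * (3 * 4 ^ t), fun t => by positivity, fun F hF => ?_⟩
  set m := ∑ t ∈ F, 3 * 4 ^ t with hm
  have hmpos : 0 < m := by
    obtain ⟨a, ha⟩ := hF
    exact Finset.sum_pos' (fun t _ => by positivity) ⟨a, ha, by positivity⟩
  have hsum : ∑ t ∈ F, 2 ^ L * (3 * 4 ^ t) = 2 ^ L * m := by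
    rw [hm, Finset.mul_sum]
  rw [hsum]
  refine ⟨by positivity, fun j hj => ?_⟩
  have hjL : j < 2 ^ L := lt_of_lt_of_le hj (Nat.le_of_lt (Nat.lt_two_pow_self (n := L)))
  have : 2 ^ L * m + j = j + 2 ^ L * m := by ring
  rw [TM, TM, this, digit_sum_add L m j hmpos hjL]
  have h2 := digit_sum_even F
  rw [← hm] at h2
  omega
end

section
/- For every positive integer L, the set {n ∈ ℕ : t_{n+j} = 1 − t_j for all 0 ≤ j ≤ L−1} of occurrences in the Thue-Morse word of the length-L prefix of the complementary word 𝕋̄ is infinite FS-big, i.e., it is k^∞-summable for every positive integer k. -/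
/-- Binary digit sum. -/
def S (n : ℕ) : ℕ := (Nat.digits 2 n).sum

lemma S_two_mul (n : ℕ) : S (2 * n) = S n := by
  rcases Nat.eq_zero_or_pos n with h | h
  · simp [h, S]
  · unfold S
    rw [Nat.digits_def' (by norm_num : 1 < 2) (by omega)]
    simp [Nat.mul_div_cancel_left, Nat.mul_mod_right]

lemma S_two_mul_add_one (n : ℕ) : S (2 * n + 1) = S n + 1 := by
  unfold S
  rw [Nat.digits_def' (by norm_num : 1 < 2) (by omega)]
  have h1 : (2 * n + 1) % 2 = 1 := by omega
  have h2 : (2 * n + 1) / 2 = n := by omega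
  rw [h1, h2]
  simp [Nat.add_comm]

lemma S_zero : S 0 = 0 := by simp [S]

lemma S_three : S 3 = 2 := by
  rw [show (3:ℕ) = 2 * 1 + 1 from rfl, S_two_mul_add_one,
    show (1:ℕ) = 2 * 0 + 1 from rfl, S_two_mul_add_one, S_zero]

lemma S_split : ∀ (m q j : ℕ), j < 2 ^ m → S (q * 2 ^ m + j) = S q + S j := by
  intro m
  induction m with
  | zero =>
    intro q j hj
    interval_cases j
    simp [S_zero]
  | succ m ih =>
    intro q j hj
    have h2 : (2:ℕ) ^ (m + 1) = 2 * 2 ^ m := by ring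
    have hj2 : j / 2 < 2 ^ m := by omega
    have hq : q * 2 ^ (m + 1) = 2 * (q * 2 ^ m) := by ring
    have hkey : q * 2 ^ (m + 1) + j = 2 * (q * 2 ^ m + j / 2) + j % 2 := by
      rw [hq]; omega
    rcases Nat.mod_two_eq_zero_or_one j with hb | hb
    · have hSj : S j = S (j / 2) := by
        conv_lhs => rw [show j = 2 * (j / 2) by omega]
        rw [S_two_mul]
      rw [hkey, hb, Nat.add_zero, S_two_mul, ih _ _ hj2, hSj]
    · have hSj : S j = S (j / 2) + 1 := by
        conv_lhs => rw [show j = 2 * (j / 2) + 1 by omega]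
        rw [S_two_mul_add_one]
      rw [hkey, hb, S_two_mul_add_one, ih _ _ hj2, hSj]
      ring

lemma S_compl : ∀ (a m : ℕ), m < 2 ^ a → S m + S (2 ^ a - 1 - m) = a := by
  intro a
  induction a with
  | zero =>
    intro m hm
    interval_cases m
    simp [S_zero]
  | succ a ih =>
    intro m hm
    have h2 : (2:ℕ) ^ (a + 1) = 2 * 2 ^ a := by ring
    have hm2 : m / 2 < 2 ^ a := by omega
    have hpos : 1 ≤ 2 ^ a := Nat.one_le_two_pow
    rcases Nat.mod_two_eq_zero_or_one m with hb | hb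
    · have hkey : 2 ^ (a + 1) - 1 - m = 2 * (2 ^ a - 1 - m / 2) + 1 := by omega
      have hSm : S m = S (m / 2) := by
        conv_lhs => rw [show m = 2 * (m / 2) by omega]
        rw [S_two_mul]
      rw [hkey, S_two_mul_add_one, hSm]
      have := ih (m / 2) hm2
      omega
    · have hkey : 2 ^ (a + 1) - 1 - m = 2 * (2 ^ a - 1 - m / 2) := by omega
      have hSm : S m = S (m / 2) + 1 := by
        conv_lhs => rw [show m = 2 * (m / 2) + 1 by omega]
        rw [S_two_mul_add_one]
      rw [hkey, S_two_mul, hSm]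
      have := ih (m / 2) hm2
      omega

lemma S_shift (e m : ℕ) : S (2 ^ e * m) = S m := by
  induction e with
  | zero => simp
  | succ e ih =>
    rw [show 2 ^ (e + 1) * m = 2 * (2 ^ e * m) by ring, S_two_mul, ih]

lemma S_mul_pred_pow (a r : ℕ) (h1 : 1 ≤ r) (h2 : r ≤ 2 ^ a) :
    S (r * (2 ^ a - 1)) = a := by
  have hpos : 1 ≤ 2 ^ a := Nat.one_le_two_pow
  have hkey : r * (2 ^ a - 1) = (r - 1) * 2 ^ a + (2 ^ a - 1 - (r - 1)) := by
    have h1' : 1 ≤ r := h1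
    zify [Nat.sub_le, hpos, h1', show r - 1 ≤ 2 ^ a - 1 by omega]
    ring
  rw [hkey, S_split a _ _ (by omega)]
  have := S_compl a (r - 1) (by omega)
  omega

lemma blocks (D : ℕ) (hD : 2 ≤ D) :
    ∀ (n : ℕ) (F : Finset ℕ), F ⊆ Finset.range n →
      S (∑ t ∈ F, 3 * 2 ^ (D * (t + 1))) = 2 * F.card ∧
      (∑ t ∈ F, 3 * 2 ^ (D * (t + 1))) < 2 ^ (D * n + 2) := by
  intro n
  induction n with
  | zero =>
    intro F hF
    have : F = ∅ := Finset.subset_empty.mp (by simpa using hF)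
    subst this
    simp [S_zero]
  | succ n ih =>
    intro F hF
    by_cases hn : n ∈ F
    · have hsub : F.erase n ⊆ Finset.range n := by
        intro t ht
        have h1 := Finset.mem_of_mem_erase ht
        have h2 := Finset.ne_of_mem_erase ht
        have := hF h1
        simp only [Finset.mem_range] at this ⊢
        omega
      obtain ⟨h1, h2⟩ := ih (F.erase n) hsub
      have hs : ∑ t ∈ F, 3 * 2 ^ (D * (t + 1)) =
          3 * 2 ^ (D * (n + 1)) + ∑ t ∈ F.erase n, 3 * 2 ^ (D * (t + 1)) :=
        (Finset.add_sum_erase _ _ hn).symm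
      have hle : D * n + 2 ≤ D * (n + 1) := by nlinarith
      have hlt : (∑ t ∈ F.erase n, 3 * 2 ^ (D * (t + 1))) < 2 ^ (D * (n + 1)) :=
        lt_of_lt_of_le h2 (Nat.pow_le_pow_right (by norm_num) hle)
      have hcard : F.card = (F.erase n).card + 1 := by
        rw [Finset.card_erase_of_mem hn]
        have := Finset.card_pos.mpr ⟨n, hn⟩
        omega
      constructor
      · rw [hs, S_split _ 3 _ hlt, S_three, h1, hcard]
        ring
      · rw [hs]
        have h4 : (2:ℕ) ^ (D * (n + 1) + 2) = 4 * 2 ^ (D * (n + 1)) := by ring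
        omega
    · have hsub : F ⊆ Finset.range n := by
        intro t ht
        have := hF ht
        simp only [Finset.mem_range] at this ⊢
        rcases Nat.lt_succ_iff_lt_or_eq.mp this with h | h
        · exact h
        · exact absurd (h ▸ ht) hn
      obtain ⟨h1, h2⟩ := ih F hsub
      refine ⟨h1, lt_of_lt_of_le h2 (Nat.pow_le_pow_right (by norm_num) (by nlinarith))⟩

lemma ufs_of_superinc (x : ℕ → ℕ)
    (hx : ∀ t, ∑ i ∈ Finset.range t, x i < x t) : UFSInf x := by
  have key : ∀ (n : ℕ) (F H : Finset ℕ), F ⊆ Finset.range n → H ⊆ Finset.range n →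
      ∑ t ∈ F, x t = ∑ t ∈ H, x t → F = H := by
    intro n
    induction n with
    | zero =>
      intro F H hF hH _
      have hF' : F = ∅ := Finset.subset_empty.mp (by simpa using hF)
      have hH' : H = ∅ := Finset.subset_empty.mp (by simpa using hH)
      rw [hF', hH']
    | succ n ih =>
      intro F H hF hH hsum
      have hsubF : ∀ (G : Finset ℕ), G ⊆ Finset.range (n + 1) → n ∉ G →
          G ⊆ Finset.range n := by
        intro G hG hnG t ht
        have := hG ht
        simp only [Finset.mem_range] at this ⊢
        rcases Nat.lt_succ_iff_lt_or_eq.mp this with h | h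
        · exact h
        · exact absurd (h ▸ ht) hnG
      have herase : ∀ (G : Finset ℕ), G ⊆ Finset.range (n + 1) →
          G.erase n ⊆ Finset.range n := by
        intro G hG t ht
        have h1 := Finset.mem_of_mem_erase ht
        have h2 := Finset.ne_of_mem_erase ht
        have := hG h1
        simp only [Finset.mem_range] at this ⊢
        omega
      by_cases hnF : n ∈ F <;> by_cases hnH : n ∈ H
      · have hF' : ∑ t ∈ F, x t = x n + ∑ t ∈ F.erase n, x t :=
          (Finset.add_sum_erase _ _ hnF).symm
        have hH' : ∑ t ∈ H, x t = x n + ∑ t ∈ H.erase n, x t :=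
          (Finset.add_sum_erase _ _ hnH).symm
        have heq : F.erase n = H.erase n :=
          ih _ _ (herase F hF) (herase H hH) (by omega)
        rw [← Finset.insert_erase hnF, ← Finset.insert_erase hnH, heq]
      · exfalso
        have h1 : ∑ t ∈ H, x t ≤ ∑ i ∈ Finset.range n, x i :=
          Finset.sum_le_sum_of_subset (hsubF H hH hnH)
        have h2 : x n ≤ ∑ t ∈ F, x t :=
          Finset.single_le_sum (fun i _ => Nat.zero_le _) hnF
        have := hx n
        omega
      · exfalso
        have h1 : ∑ t ∈ F, x t ≤ ∑ i ∈ Finset.range n, x i :=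
          Finset.sum_le_sum_of_subset (hsubF F hF hnF)
        have h2 : x n ≤ ∑ t ∈ H, x t :=
          Finset.single_le_sum (fun i _ => Nat.zero_le _) hnH
        have := hx n
        omega
      · exact ih _ _ (hsubF F hF hnF) (hsubF H hH hnH) hsum
  intro F H _ _ hsum
  set n := (F ∪ H).sup id + 1 with hn
  refine key n F H ?_ ?_ hsum
  · intro t ht
    simp only [Finset.mem_range, hn]
    have : t ≤ (F ∪ H).sup id := Finset.le_sup (f := id) (Finset.mem_union_left _ ht)
    omega
  · intro t ht
    simp only [Finset.mem_range, hn]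
    have : t ≤ (F ∪ H).sup id := Finset.le_sup (f := id) (Finset.mem_union_right _ ht)
    omega

lemma TM_eq_S_mod (n : ℕ) : TM n = S n % 2 := rfl

/-- The set of occurrences in the Thue-Morse word of the length-`L` prefix of
the complementary word is infinite FS-big, i.e., `k^∞`-summable for every
positive integer `k`. -/
theorem tmbar_prefix_occurrences_infinite_FS_big (L : ℕ) (hL : 0 < L)
    (k : ℕ) (hk : 0 < k) :
    KInfSummable {n : ℕ | ∀ j < L, TM (n + j) = 1 - TM j} k := by
  set a := 2 * k + 1 with ha
  set u := 2 ^ a - 1 with hu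
  set D := k * u * 2 ^ L + L + 2 with hD
  have ha1 : 2 ≤ 2 ^ a := by
    calc (2:ℕ) = 2 ^ 1 := rfl
    _ ≤ 2 ^ a := Nat.pow_le_pow_right (by norm_num) (by omega)
  have hu1 : 1 ≤ u := by omega
  have hL2 : L < 2 ^ L := Nat.lt_two_pow_self
  have hD2 : 2 ≤ D := by omega
  have hDL : L ≤ D := by omega
  have hDpow : D < 2 ^ D := Nat.lt_two_pow_self
  have h2Lpos : 0 < 2 ^ L := Nat.pow_pos (by norm_num)
  set x : ℕ → ℕ := fun t => u * 2 ^ L + 3 * 2 ^ (D * (t + 1)) with hx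
  refine ⟨x, ?_, ?_, ?_⟩
  · intro t
    have : 0 < u * 2 ^ L := Nat.mul_pos hu1 h2Lpos
    have : 0 < 3 * 2 ^ (D * (t + 1)) := by positivity
    simp only [hx]
    omega
  · apply ufs_of_superinc
    intro t
    induction t with
    | zero => simp [hx]
    | succ t ih =>
      rw [Finset.sum_range_succ]
      have hxt : x t = u * 2 ^ L + 3 * 2 ^ (D * (t + 1)) := rfl
      have hxt1 : x (t + 1) = u * 2 ^ L + 3 * 2 ^ (D * (t + 2)) := rfl
      have hp : (2:ℕ) ^ (D * (t + 2)) = 2 ^ (D * (t + 1)) * 2 ^ D := by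
        rw [← pow_add]; ring_nf
      have h4 : (4:ℕ) ≤ 2 ^ D := by
        calc (4:ℕ) = 2 ^ 2 := rfl
        _ ≤ 2 ^ D := Nat.pow_le_pow_right (by norm_num) hD2
      have hED : u * 2 ^ L ≤ D := by nlinarith
      have hE : u * 2 ^ L < 2 ^ D := by omega
      have hP1 : 2 ^ D ≤ 2 ^ (D * (t + 1)) :=
        Nat.pow_le_pow_right (by norm_num) (by nlinarith)
      -- need: sum_range t + x t < x (t+1); by ih suffices 2 * x t ≤ x (t+1)
      have key : 2 * x t ≤ x (t + 1) := by
        rw [hxt, hxt1, hp]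
        nlinarith
      omega
  · intro F hne hcard
    simp only [Set.mem_setOf_eq]
    set r := F.card with hr
    have hr1 : 1 ≤ r := Finset.card_pos.mpr hne
    have hrk : r ≤ k := hcard
    have hr2a : r ≤ 2 ^ a := by
      have : k < 2 ^ k := Nat.lt_two_pow_self
      have : 2 ^ k ≤ 2 ^ a := Nat.pow_le_pow_right (by norm_num) (by omega)
      omega
    set B := ∑ t ∈ F, 3 * 2 ^ (D * (t + 1)) with hB
    have hsum : ∑ t ∈ F, x t = r * (u * 2 ^ L) + B := by
      rw [hx, Finset.sum_add_distrib, Finset.sum_const, hB, hr, smul_eq_mul]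
    -- digit sum of B
    have hFsub : F ⊆ Finset.range ((F.sup id) + 1) := by
      intro t ht
      simp only [Finset.mem_range]
      have : t ≤ F.sup id := Finset.le_sup (f := id) ht
      omega
    obtain ⟨hSB, -⟩ := blocks D hD2 _ F hFsub
    -- B = 2^D * W
    have hdvd : 2 ^ D ∣ B := by
      apply Finset.dvd_sum
      intro t ht
      exact Dvd.dvd.mul_left (pow_dvd_pow 2 (by nlinarith)) 3
    obtain ⟨W, hW⟩ := hdvd
    have hSW : S W = 2 * r := by
      rw [← S_shift D W, ← hW, hSB, hr]
    have hlow : r * (u * 2 ^ L) < 2 ^ D := by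
      have h1 : r * (u * 2 ^ L) ≤ k * u * 2 ^ L := by rw [← mul_assoc]; gcongr
      omega
    have hSn : S (∑ t ∈ F, x t) = 2 * r + a := by
      rw [hsum, hW, show r * (u * 2 ^ L) + 2 ^ D * W = W * 2 ^ D + r * (u * 2 ^ L) by ring,
        S_split D W _ hlow, hSW]
      have : r * (u * 2 ^ L) = 2 ^ L * (r * u) := by ring
      rw [this, S_shift, S_mul_pred_pow a r hr1 hr2a]
    -- divisibility by 2^L
    have hdvdL : 2 ^ L ∣ ∑ t ∈ F, x t := by
      rw [hsum]
      apply Nat.dvd_add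
      · exact ⟨r * u, by ring⟩
      · rw [hW]
        exact Dvd.dvd.mul_right (pow_dvd_pow 2 hDL) W
    obtain ⟨q, hq⟩ := hdvdL
    intro j hj
    have hjL : j < 2 ^ L := by omega
    have hSnj : S (∑ t ∈ F, x t + j) = S q + S j := by
      rw [hq, show 2 ^ L * q = q * 2 ^ L by ring, S_split L q j hjL]
    have hSq : S (∑ t ∈ F, x t) = S q := by
      rw [hq, show 2 ^ L * q = q * 2 ^ L by ring]
      have := S_split L q 0 h2Lpos
      rw [Nat.add_zero] at this
      rw [this, S_zero]
      omega
    rw [TM_eq_S_mod, TM_eq_S_mod, hSnj, ← hSq, hSn, ha]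
    omega
end

section
/- For every positive integer L, the set {n ∈ ℕ : t_{n+j} = 1 − t_j for all 0 ≤ j ≤ L−1} of occurrences in the Thue-Morse word of the length-L prefix of the complementary word 𝕋̄ is not an IP-set. -/
private def S2 (n : ℕ) : ℕ := (Nat.digits 2 n).sum

private lemma S2_eq (n : ℕ) : S2 n = n % 2 + S2 (n / 2) := by
  rcases Nat.eq_zero_or_pos n with h | h
  · simp [S2, h]
  · rw [S2, Nat.digits_def' (by norm_num : 1 < 2) h]
    simp [S2]

private lemma S2_split : ∀ (M c a : ℕ), a < 2 ^ M → S2 (a + 2 ^ M * c) = S2 a + S2 c := by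
  intro M
  induction M with
  | zero =>
    intro c a ha
    interval_cases a
    simp [S2]
  | succ M ih =>
    intro c a ha
    have hpow : (2:ℕ) ^ (M + 1) = 2 * 2 ^ M := by ring
    rw [S2_eq (a + 2 ^ (M+1) * c), S2_eq a]
    have h1 : (a + 2 ^ (M+1) * c) % 2 = a % 2 := by
      have : 2 ^ (M+1) * c = 2 * (2 ^ M * c) := by rw [hpow]; ring
      omega
    have h2 : (a + 2 ^ (M+1) * c) / 2 = a / 2 + 2 ^ M * c := by
      have : 2 ^ (M+1) * c = 2 * (2 ^ M * c) := by rw [hpow]; ring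
      omega
    have h3 : a / 2 < 2 ^ M := by omega
    rw [h1, h2, ih c (a / 2) h3]
    ring

/-- The set of occurrences in the Thue-Morse word of the length-`L` prefix of
the complementary word is not an IP-set. -/
theorem tmbar_prefix_occurrences_not_IP (L : ℕ) (hL : 0 < L) :
    ¬ IsIPSet {n : ℕ | ∀ j < L, TM (n + j) = 1 - TM j} := by
  rintro ⟨x, hx, hsum⟩
  have hTM : ∀ F : Finset ℕ, F.Nonempty → TM (∑ t ∈ F, x t) = 1 := by
    intro F hF
    have h := hsum F hF 0 hL
    simpa [TM] using h
  obtain ⟨M, hM⟩ : ∃ M, x 0 < 2 ^ M := ⟨x 0, Nat.lt_two_pow_self⟩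
  set T : ℕ → ℕ := fun k => ∑ t ∈ Finset.Ico 1 (k + 1), x t with hT
  have key : ∀ j k : ℕ, j < k → T j % 2 ^ M = T k % 2 ^ M → False := by
    intro j k hjk heq
    set b : ℕ := ∑ t ∈ Finset.Ico (j + 1) (k + 1), x t with hb
    have hTkj : T j + b = T k := by
      rw [hT, hb]
      exact Finset.sum_Ico_consecutive _ (by omega) (by omega)
    have hdvd : 2 ^ M ∣ b := by
      have hme : T j + b ≡ T j + 0 [MOD 2 ^ M] := by
        rw [hTkj, Nat.add_zero]; exact heq.symm
      have := Nat.ModEq.add_left_cancel' (T j) hme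
      exact (Nat.modEq_zero_iff_dvd).mp this
    obtain ⟨c, hc⟩ := hdvd
    have hne : (Finset.Ico (j + 1) (k + 1)).Nonempty :=
      ⟨j + 1, by simp [Finset.mem_Ico]; omega⟩
    have h0notin : (0 : ℕ) ∉ Finset.Ico (j + 1) (k + 1) := by
      simp [Finset.mem_Ico]
    have hTMb : TM b = 1 := hTM _ hne
    have hTMa : TM (x 0) = 1 := by
      simpa using hTM {0} ⟨0, Finset.mem_singleton_self 0⟩
    have hTMab : TM (x 0 + b) = 1 := by
      have := hTM (insert 0 (Finset.Ico (j + 1) (k + 1))) ⟨0, Finset.mem_insert_self _ _⟩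
      rwa [Finset.sum_insert h0notin] at this
    have hSb : S2 b = S2 c := by
      have := S2_split M c 0 (pow_pos (by norm_num) M)
      simpa [hc, S2] using this
    have hSab : S2 (x 0 + b) = S2 (x 0) + S2 c := by
      rw [hc]
      exact S2_split M c (x 0) hM
    have e1 : S2 (x 0) % 2 = 1 := hTMa
    have e2 : S2 c % 2 = 1 := by rw [← hSb]; exact hTMb
    have e3 : (S2 (x 0) + S2 c) % 2 = 1 := by rw [← hSab]; exact hTMab
    omega
  have hmaps : ∀ a ∈ Finset.range (2 ^ M + 1), T a % 2 ^ M ∈ Finset.range (2 ^ M) := by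
    intro a _
    exact Finset.mem_range.mpr (Nat.mod_lt _ (pow_pos (by norm_num) M))
  obtain ⟨j, -, k, -, hjk, heq⟩ :=
    Finset.exists_ne_map_eq_of_card_lt_of_maps_to
      (by simp : (Finset.range (2 ^ M)).card < (Finset.range (2 ^ M + 1)).card)
      hmaps
  rcases lt_or_gt_of_ne hjk with h | h
  · exact key j k h heq
  · exact key k j h heq.symm
end

section
/- Let u be a factor of the Thue-Morse word 𝕋 which is neither a prefix of 𝕋 nor a prefix of 𝕋̄. Then the set 𝕋|_u of occurrences of u in 𝕋 is not 3-summable. -/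
/-- The set of occurrences of the finite word `u` in the Thue-Morse word. -/
def TMocc (u : List ℕ) : Set ℕ :=
  {n | u = (List.range u.length).map fun j => TM (n + j)}

/-- `u` is a factor of the Thue-Morse word. -/
def FactorTM (u : List ℕ) : Prop := (TMocc u).Nonempty

/-- `u` is a prefix of the Thue-Morse word. -/
def PrefixTM (u : List ℕ) : Prop := u = (List.range u.length).map TM

/-- `u` is a prefix of the complement of the Thue-Morse word. -/
def PrefixTMBar (u : List ℕ) : Prop :=
  u = (List.range u.length).map fun j => 1 - TM j

lemma TM_le (n : ℕ) : TM n ≤ 1 := Nat.le_of_lt_succ (Nat.mod_lt _ (by norm_num))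

lemma TM_double (n : ℕ) : TM (2 * n) = TM n := by
  rcases Nat.eq_zero_or_pos n with h | h
  · subst h; rfl
  · unfold TM
    rw [Nat.digits_def' (by norm_num : 1 < 2) (by omega : 0 < 2 * n),
      (by omega : 2 * n % 2 = 0), (by omega : 2 * n / 2 = n), List.sum_cons]
    omega

lemma TM_odd (n : ℕ) : TM (2 * n + 1) = 1 - TM n := by
  unfold TM
  rw [Nat.digits_def' (by norm_num : 1 < 2) (by omega : 0 < 2 * n + 1),
    (by omega : (2 * n + 1) % 2 = 1), (by omega : (2 * n + 1) / 2 = n), List.sum_cons]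
  omega

lemma TM_zero : TM 0 = 0 := by simp [TM]

lemma TM_one : TM 1 = 1 := by
  have := TM_odd 0; simpa [TM_zero] using this

lemma mem_TMocc {u : List ℕ} {n : ℕ} :
    n ∈ TMocc u ↔ ∀ j (h : j < u.length), u[j] = TM (n + j) := by
  constructor
  · intro hmem j hj
    have h2 : j < ((List.range u.length).map fun j => TM (n + j)).length := by
      simpa using hj
    rw [List.getElem_of_eq hmem hj]
    simp
  · intro h
    apply List.ext_getElem
    · simp
    · intro i h1 h2
      simp [h i h1]

lemma prefixTM_iff {u : List ℕ} :
    PrefixTM u ↔ ∀ j (h : j < u.length), u[j] = TM j := by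
  constructor
  · intro hmem j hj
    rw [List.getElem_of_eq hmem hj]
    simp
  · intro h
    apply List.ext_getElem
    · simp
    · intro i h1 h2
      simp [h i h1]

lemma prefixTMBar_iff {u : List ℕ} :
    PrefixTMBar u ↔ ∀ j (h : j < u.length), u[j] = 1 - TM j := by
  constructor
  · intro hmem j hj
    rw [List.getElem_of_eq hmem hj]
    simp
  · intro h
    apply List.ext_getElem
    · simp
    · intro i h1 h2
      simp [h i h1]

lemma occ_mod4 {x n : ℕ} (hx : x ≤ 1) (h0 : TM n = x) (h1 : TM (n+1) = 1 - x)
    (h2 : TM (n+2) = x) : n % 4 = 2 ∨ n % 4 = 3 := by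
  have hr : n % 4 = 0 ∨ n % 4 = 1 ∨ n % 4 = 2 ∨ n % 4 = 3 := by omega
  rcases hr with hr | hr | hr | hr
  · obtain ⟨p, rfl⟩ : ∃ p, n = 4 * p := ⟨n / 4, by omega⟩
    have e0 : TM (4 * p) = TM p := by
      rw [show 4 * p = 2 * (2 * p) by ring, TM_double, TM_double]
    have e2 : TM (4 * p + 2) = 1 - TM p := by
      rw [show 4 * p + 2 = 2 * (2 * p + 1) by ring, TM_double, TM_odd]
    have := TM_le p
    omega
  · obtain ⟨p, rfl⟩ : ∃ p, n = 4 * p + 1 := ⟨n / 4, by omega⟩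
    have e0 : TM (4 * p + 1) = 1 - TM p := by
      rw [show 4 * p + 1 = 2 * (2 * p) + 1 by ring, TM_odd, TM_double]
    have e1 : TM (4 * p + 1 + 1) = 1 - TM p := by
      rw [show 4 * p + 1 + 1 = 2 * (2 * p + 1) by ring, TM_double, TM_odd]
    have := TM_le p
    omega
  · exact Or.inl hr
  · exact Or.inr hr
lemma key : ∀ ℓ : ℕ, ∀ u : List ℕ, u.length = ℓ →
    ¬ PrefixTM u → ¬ PrefixTMBar u →
    ∀ a b c : ℕ, a ∈ TMocc u → b ∈ TMocc u → c ∈ TMocc u →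
      a + b ∈ TMocc u → a + c ∈ TMocc u → b + c ∈ TMocc u →
      a + b + c ∈ TMocc u → False := by
  intro ℓ
  induction ℓ using Nat.strong_induction_on with
  | _ ℓ IH =>
  intro u hlen h1 h2 a b c ha hb hc hab hac hbc habc
  have hua := mem_TMocc.mp ha
  rcases Nat.lt_or_ge ℓ 2 with hsmall | hbig
  · rcases Nat.lt_or_ge ℓ 1 with h0 | h1'
    · exact h1 (by rw [prefixTM_iff]; intro j hj; omega)
    · -- ℓ = 1
      have hle := TM_le (a + 0)
      by_cases hx : TM (a + 0) = 0
      · apply h1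
        rw [prefixTM_iff]
        intro j hj
        have hj0 : j = 0 := by omega
        subst hj0
        rw [hua 0 (by omega), TM_zero]
        exact hx
      · apply h2
        rw [prefixTMBar_iff]
        intro j hj
        have hj0 : j = 0 := by omega
        subst hj0
        rw [hua 0 (by omega), TM_zero]
        omega
  · by_cases hall : a % 2 = 0 ∧ b % 2 = 0 ∧ c % 2 = 0
    · -- all even : desubstitute
      obtain ⟨ha2, hb2, hc2⟩ := hall
      obtain ⟨a', rfl⟩ : ∃ t, a = 2 * t := ⟨a / 2, by omega⟩
      obtain ⟨b', rfl⟩ : ∃ t, b = 2 * t := ⟨b / 2, by omega⟩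
      obtain ⟨c', rfl⟩ : ∃ t, c = 2 * t := ⟨c / 2, by omega⟩
      set L := (ℓ + 1) / 2 with hL
      set v : List ℕ := (List.range L).map (fun j => TM (a' + j)) with hv
      have hvlen : v.length = L := by simp [hv]
      have hvget : ∀ j (h : j < v.length), v[j] = TM (a' + j) := by
        intro j hj
        simp [hv]
      have htrans : ∀ m : ℕ, 2 * m ∈ TMocc u → m ∈ TMocc v := by
        intro m hm
        have hum := mem_TMocc.mp hm
        rw [mem_TMocc]
        intro j hj
        rw [hvget j hj]
        have hjL : j < L := by rwa [hvlen] at hj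
        have h2j : 2 * j < u.length := by omega
        have e1 : TM (a' + j) = TM (2 * a' + 2 * j) := by
          rw [show 2 * a' + 2 * j = 2 * (a' + j) by ring, TM_double]
        have e2 : TM (m + j) = TM (2 * m + 2 * j) := by
          rw [show 2 * m + 2 * j = 2 * (m + j) by ring, TM_double]
        have e3 := hua (2 * j) h2j
        have e4 := hum (2 * j) h2j
        rw [e3] at e4
        rw [e1, e2]
        exact e4
      have hpv : ¬ PrefixTM v := by
        intro hp
        apply h1
        rw [prefixTM_iff]
        have hp' := prefixTM_iff.mp hp
        intro i hi
        rw [hua i hi]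
        rcases Nat.even_or_odd i with ⟨j, hj⟩ | ⟨j, hj⟩
        · have hjL : j < v.length := by rw [hvlen]; omega
          have hthis := hp' j hjL
          rw [hvget j hjL] at hthis
          rw [show 2 * a' + i = 2 * (a' + j) by omega, TM_double, hthis,
            show i = 2 * j by omega, TM_double]
        · have hjL : j < v.length := by rw [hvlen]; omega
          have hthis := hp' j hjL
          rw [hvget j hjL] at hthis
          rw [show 2 * a' + i = 2 * (a' + j) + 1 by omega, TM_odd, hthis,
            show i = 2 * j + 1 by omega, TM_odd]
      have hpv' : ¬ PrefixTMBar v := by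
        intro hp
        apply h2
        rw [prefixTMBar_iff]
        have hp' := prefixTMBar_iff.mp hp
        intro i hi
        rw [hua i hi]
        rcases Nat.even_or_odd i with ⟨j, hj⟩ | ⟨j, hj⟩
        · have hjL : j < v.length := by rw [hvlen]; omega
          have hthis := hp' j hjL
          rw [hvget j hjL] at hthis
          rw [show 2 * a' + i = 2 * (a' + j) by omega, TM_double, hthis,
            show i = 2 * j by omega, TM_double]
        · have hjL : j < v.length := by rw [hvlen]; omega
          have hthis := hp' j hjL
          rw [hvget j hjL] at hthis
          have htj := TM_le j
          rw [show 2 * a' + i = 2 * (a' + j) + 1 by omega, TM_odd, hthis,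
            show i = 2 * j + 1 by omega, TM_odd]
      exact IH L (by omega) v hvlen hpv hpv' a' b' c'
        (htrans a' ha) (htrans b' hb) (htrans c' hc)
        (htrans (a' + b') (by rw [show 2 * (a' + b') = 2 * a' + 2 * b' by ring]; exact hab))
        (htrans (a' + c') (by rw [show 2 * (a' + c') = 2 * a' + 2 * c' by ring]; exact hac))
        (htrans (b' + c') (by rw [show 2 * (b' + c') = 2 * b' + 2 * c' by ring]; exact hbc))
        (htrans (a' + b' + c')
          (by rw [show 2 * (a' + b' + c') = 2 * a' + 2 * b' + 2 * c' by ring]; exact habc))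
    · -- both parities occur among occurrences
      have hboth : ∃ e o, e ∈ TMocc u ∧ o ∈ TMocc u ∧ e % 2 = 0 ∧ o % 2 = 1 := by
        by_cases pa : a % 2 = 0
        · by_cases pb : b % 2 = 0
          · by_cases pc : c % 2 = 0
            · exact absurd ⟨pa, pb, pc⟩ hall
            · exact ⟨a, c, ha, hc, pa, by omega⟩
          · exact ⟨a, b, ha, hb, pa, by omega⟩
        · by_cases pb : b % 2 = 0
          · exact ⟨b, a, hb, ha, pb, by omega⟩
          · exact ⟨a + b, a, hab, ha, by omega, by omega⟩
      obtain ⟨e, o, he, ho, hep, hop⟩ := hboth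
      have hue := mem_TMocc.mp he
      have huo := mem_TMocc.mp ho
      have hestep : ∀ j, j + 1 < u.length → TM (e + (j + 1)) = 1 - TM (e + j) := by
        intro j hj
        rcases Nat.even_or_odd (e + j) with ⟨m, hm⟩ | ⟨m, hm⟩
        · rw [show e + (j + 1) = 2 * m + 1 by omega, show e + j = 2 * m by omega,
            TM_odd, TM_double]
        · have b1 : TM (o + j) = TM (e + j) :=
            (huo j (by omega)).symm.trans (hue j (by omega))
          have b2 : TM (o + (j + 1)) = TM (e + (j + 1)) :=
            (huo (j + 1) hj).symm.trans (hue (j + 1) hj)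
          obtain ⟨m', hm'⟩ : ∃ t, o + j = 2 * t := ⟨(o + j) / 2, by omega⟩
          rw [← b1, ← b2, show o + (j + 1) = 2 * m' + 1 by omega, hm', TM_odd, TM_double]
      have he1 : TM (e + 1) = 1 - TM e := by simpa using hestep 0 (by omega)
      rcases Nat.lt_or_ge ℓ 3 with hl2 | hl3
      · -- ℓ = 2 : u is a prefix of 𝕋 or of 𝕋̄
        have hle := TM_le e
        by_cases hx : TM e = 0
        · apply h1
          rw [prefixTM_iff]
          intro j hj
          have : j = 0 ∨ j = 1 := by omega
          rcases this with rfl | rfl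
          · rw [hue 0 (by omega), TM_zero]
            simpa using hx
          · rw [hue 1 (by omega), TM_one]
            have := TM_one
            omega
        · apply h2
          rw [prefixTMBar_iff]
          intro j hj
          have : j = 0 ∨ j = 1 := by omega
          rcases this with rfl | rfl
          · rw [hue 0 (by omega), TM_zero]
            simpa using (by omega : TM e = 1)
          · rw [hue 1 (by omega), TM_one]
            omega
      · -- ℓ ≥ 3 : mod 4 argument
        have he2 : TM (e + 2) = 1 - TM (e + 1) := by simpa using hestep 1 (by omega)
        have hmod : ∀ n, n ∈ TMocc u → n % 4 = 2 ∨ n % 4 = 3 := by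
          intro n hn
          have hun := mem_TMocc.mp hn
          have g0 : TM (n + 0) = TM (e + 0) :=
            (hun 0 (by omega)).symm.trans (hue 0 (by omega))
          have g1 : TM (n + 1) = TM (e + 1) :=
            (hun 1 (by omega)).symm.trans (hue 1 (by omega))
          have g2 : TM (n + 2) = TM (e + 2) :=
            (hun 2 (by omega)).symm.trans (hue 2 (by omega))
          simp only [Nat.add_zero] at g0
          have hle := TM_le e
          have hle1 := TM_le (e + 1)
          exact occ_mod4 (x := TM e) hle g0 (by omega) (by omega)
        have q1 := hmod a ha
        have q2 := hmod b hb
        have q3 := hmod c hc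
        have q4 := hmod (a + b) hab
        have q5 := hmod (a + c) hac
        have q6 := hmod (b + c) hbc
        have q7 := hmod (a + b + c) habc
        omega

/-- If `u` is a factor of the Thue-Morse word which is neither a prefix of `𝕋`
nor of `𝕋̄`, then the set of occurrences of `u` is not `3`-summable. -/
theorem tm_factor_not_three_summable (u : List ℕ) (hfac : FactorTM u)
    (h1 : ¬ PrefixTM u) (h2 : ¬ PrefixTMBar u) :
    ¬ KSummable (TMocc u) 3 := by
  rintro ⟨x, hpos, hufs, hsum⟩
  have m1 : x 1 ∈ TMocc u := by
    have := hsum {1} (by decide) ⟨1, by simp⟩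
    simpa using this
  have m2 : x 2 ∈ TMocc u := by
    have := hsum {2} (by decide) ⟨2, by simp⟩
    simpa using this
  have m3 : x 3 ∈ TMocc u := by
    have := hsum {3} (by decide) ⟨3, by simp⟩
    simpa using this
  have m12 : x 1 + x 2 ∈ TMocc u := by
    have := hsum {1, 2} (by decide) ⟨1, by simp⟩
    rwa [Finset.sum_pair (by norm_num)] at this
  have m13 : x 1 + x 3 ∈ TMocc u := by
    have := hsum {1, 3} (by decide) ⟨1, by simp⟩
    rwa [Finset.sum_pair (by norm_num)] at this
  have m23 : x 2 + x 3 ∈ TMocc u := by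
    have := hsum {2, 3} (by decide) ⟨2, by simp⟩
    rwa [Finset.sum_pair (by norm_num)] at this
  have m123 : x 1 + x 2 + x 3 ∈ TMocc u := by
    have := hsum {1, 2, 3} (by decide) ⟨1, by simp⟩
    rwa [Finset.sum_insert (by decide), Finset.sum_pair (by norm_num), ← add_assoc] at this
  exact key u.length u rfl h1 h2 (x 1) (x 2) (x 3) m1 m2 m3 m12 m13 m23 m123
end

section
/- Let A_0 = {n ∈ ℕ⁺ : t_n = 1 and min(supp(n)) is even} and A_1 = {n ∈ ℕ⁺ : t_n = 1 and min(supp(n)) is odd}. Then A_0 ∪ A_1 = 𝕋|_1 = {n : t_n = 1}, and neither A_0 nor A_1 is 2^∞-summable. -/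
/-- The minimum of the binary support of `n` (for `n > 0`), i.e. the 2-adic
valuation of `n`. -/
def minSupp (n : ℕ) : ℕ := n.factorization 2

/-- If `a,b` have the same 2-adic valuation `v` and the valuation of `a+b`
has the same parity as `v`, then `4` divides the sum of the odd parts. -/
lemma four_dvd_odd_parts {a b v : ℕ} (ha : 0 < a) (hb : 0 < b)
    (hva : minSupp a = v) (hvb : minSupp b = v)
    (hs : minSupp (a + b) % 2 = v % 2) :
    4 ∣ (a / 2 ^ v + b / 2 ^ v) := by
  set a' := a / 2 ^ v with ha'
  set b' := b / 2 ^ v with hb'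
  have hae : 2 ^ v * a' = a := by
    rw [ha', ← hva]; exact Nat.ordProj_mul_ordCompl_eq_self a 2
  have hbe : 2 ^ v * b' = b := by
    rw [hb', ← hvb]; exact Nat.ordProj_mul_ordCompl_eq_self b 2
  have hoa : ¬ 2 ∣ a' := by rw [ha', ← hva]; exact Nat.not_dvd_ordCompl Nat.prime_two ha.ne'
  have hob : ¬ 2 ∣ b' := by rw [hb', ← hvb]; exact Nat.not_dvd_ordCompl Nat.prime_two hb.ne'
  have ha'pos : 0 < a' := by
    rcases Nat.eq_zero_or_pos a' with h | h
    · rw [h, mul_zero] at hae; omega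
    · exact h
  have hsne : a' + b' ≠ 0 := (Nat.add_pos_left ha'pos b').ne'
  have hab : a + b = 2 ^ v * (a' + b') := by rw [mul_add, hae, hbe]
  have hfac : minSupp (a + b) = v + (a' + b').factorization 2 := by
    rw [hab, minSupp, Nat.factorization_mul (pow_ne_zero v two_ne_zero) hsne]
    simp [Nat.Prime.factorization_pow, Nat.Prime.factorization_self Nat.prime_two]
  have hdvd2 : 2 ∣ (a' + b') := by omega
  have hpos : 0 < (a' + b').factorization 2 :=
    Nat.Prime.factorization_pos_of_dvd Nat.prime_two hsne hdvd2
  have h2 : 2 ≤ (a' + b').factorization 2 := by omega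
  have : (2:ℕ) ^ 2 ∣ a' + b' := dvd_trans (pow_dvd_pow 2 h2) (Nat.ordProj_dvd _ 2)
  norm_num at this; exact this

lemma caseA {a b c v : ℕ} (ha : 0 < a) (hb : 0 < b) (hc : 0 < c)
    (hva : minSupp a = v) (hvb : minSupp b = v) (hvc : minSupp c = v)
    (hab : minSupp (a + b) % 2 = v % 2)
    (hac : minSupp (a + c) % 2 = v % 2)
    (hbc : minSupp (b + c) % 2 = v % 2) : False := by
  have h1 := four_dvd_odd_parts ha hb hva hvb hab
  have h2 := four_dvd_odd_parts ha hc hva hvc hac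
  have h3 := four_dvd_odd_parts hb hc hvb hvc hbc
  have hoa : ¬ 2 ∣ (a / 2 ^ v) := by rw [← hva]; exact Nat.not_dvd_ordCompl Nat.prime_two ha.ne'
  have hob : ¬ 2 ∣ (b / 2 ^ v) := by rw [← hvb]; exact Nat.not_dvd_ordCompl Nat.prime_two hb.ne'
  have hoc : ¬ 2 ∣ (c / 2 ^ v) := by rw [← hvc]; exact Nat.not_dvd_ordCompl Nat.prime_two hc.ne'
  omega

lemma caseB {a b : ℕ} (ha : 0 < a) (hb : 0 < b)
    (hTa : TM a = 1) (hTb : TM b = 1) (hTab : TM (a + b) = 1)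
    (hK : (Nat.digits 2 a).length ≤ minSupp b) : False := by
  set K := (Nat.digits 2 a).length with hKdef
  have hdvd : 2 ^ K ∣ b := dvd_trans (pow_dvd_pow 2 hK) (Nat.ordProj_dvd b 2)
  set c := b / 2 ^ K with hc
  have hbc : b = 2 ^ K * c := (Nat.mul_div_cancel' hdvd).symm
  have hcpos : 0 < c := by
    rcases Nat.eq_zero_or_pos c with h | h
    · rw [h, mul_zero] at hbc; omega
    · exact h
  have hsc : (Nat.digits 2 c).sum % 2 = 1 := by
    rw [TM, hbc, Nat.digits_base_pow_mul one_lt_two hcpos] at hTb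
    simpa using hTb
  have : TM (a + b) = 0 := by
    rw [TM, hbc, ← Nat.digits_append_digits two_pos, List.sum_append]
    have hsa : (Nat.digits 2 a).sum % 2 = 1 := hTa
    omega
  omega

lemma not_summable_aux (A : Set ℕ) (ε : ℕ)
    (hA : ∀ n ∈ A, 0 < n ∧ TM n = 1 ∧ minSupp n % 2 = ε) :
    ¬ KInfSummable A 2 := by
  rintro ⟨x, hpos, -, hsum⟩
  have h1 : ∀ t, x t ∈ A := by
    intro t
    have := hsum {t} (by simp) (by simp)
    simpa using this
  have h2 : ∀ n m, n ≠ m → x n + x m ∈ A := by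
    intro n m hnm
    have := hsum {n, m} (by simp) (by rw [Finset.card_pair hnm])
    rwa [Finset.sum_pair hnm] at this
  by_cases hfib : ∃ v, {t | minSupp (x t) = v}.Infinite
  · obtain ⟨v, hv⟩ := hfib
    obtain ⟨n, hn⟩ := hv.nonempty
    obtain ⟨m, hm⟩ := (hv.diff (Set.finite_singleton n)).nonempty
    obtain ⟨p, hp⟩ := ((hv.diff (Set.finite_singleton n)).diff (Set.finite_singleton m)).nonempty
    have hmn : m ≠ n := by simpa using hm.2
    have hpn : p ≠ n := by simpa using hp.1.2
    have hpm : p ≠ m := by simpa using hp.2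
    have hvn : minSupp (x n) = v := hn
    have hvm : minSupp (x m) = v := hm.1
    have hvp : minSupp (x p) = v := hp.1.1
    have hε : v % 2 = ε := by rw [← hvn]; exact (hA _ (h1 n)).2.2
    have hps : ∀ i j : ℕ, i ≠ j → minSupp (x i + x j) % 2 = v % 2 := by
      intro i j hij
      rw [hε]; exact (hA _ (h2 i j hij)).2.2
    exact caseA (hpos n) (hpos m) (hpos p) hvn hvm hvp
      (hps n m (Ne.symm hmn)) (hps n p (Ne.symm hpn)) (hps m p (Ne.symm hpm))
  · push_neg at hfib
    set K := (Nat.digits 2 (x 0)).length with hK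
    have hfin : {t | minSupp (x t) < K}.Finite := by
      apply Set.Finite.subset (Set.Finite.biUnion (Finset.range K).finite_toSet
        (fun v _ => hfib v))
      intro t ht
      exact Set.mem_biUnion (by simpa using ht) rfl
    obtain ⟨m, hm⟩ := hfin.infinite_compl.nonempty
    have hmK : K ≤ minSupp (x m) := by
      have : ¬ minSupp (x m) < K := hm
      omega
    have h0K : minSupp (x 0) < K := by
      by_contra h
      have hKm : K ≤ minSupp (x 0) := by omega
      have hd : 2 ^ K ∣ x 0 :=
        dvd_trans (pow_dvd_pow 2 hKm) (Nat.ordProj_dvd (x 0) 2)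
      have h1 := Nat.le_of_dvd (hpos 0) hd
      have h2 := Nat.lt_base_pow_length_digits (b := 2) (m := x 0) one_lt_two
      rw [← hK] at h2
      omega
    have hm0 : (0 : ℕ) ≠ m := by
      intro h; rw [← h] at hmK; omega
    exact caseB (hpos 0) (hpos m) (hA _ (h1 0)).2.1 (hA _ (h1 m)).2.1
      (hA _ (h2 0 m hm0)).2.1 hmK

/-- Splitting `𝕋|_1` according to the parity of the minimum of the binary
support yields two sets neither of which is `2^∞`-summable. -/
theorem tm_one_partition_not_two_inf_summable :
    ({n : ℕ | 0 < n ∧ TM n = 1 ∧ Even (minSupp n)} ∪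
      {n : ℕ | 0 < n ∧ TM n = 1 ∧ Odd (minSupp n)} = {n : ℕ | TM n = 1}) ∧
    ¬ KInfSummable {n : ℕ | 0 < n ∧ TM n = 1 ∧ Even (minSupp n)} 2 ∧
    ¬ KInfSummable {n : ℕ | 0 < n ∧ TM n = 1 ∧ Odd (minSupp n)} 2 := by
  refine ⟨?_, ?_, ?_⟩
  · ext n
    simp only [Set.mem_union, Set.mem_setOf_eq]
    constructor
    · rintro (⟨-, h, -⟩ | ⟨-, h, -⟩) <;> exact h
    · intro h
      have hn : 0 < n := by
        rcases Nat.eq_zero_or_pos n with rfl | h'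
        · simp [TM] at h
        · exact h'
      rcases Nat.even_or_odd (minSupp n) with he | ho
      · exact Or.inl ⟨hn, h, he⟩
      · exact Or.inr ⟨hn, h, ho⟩
  · exact not_summable_aux _ 0 (fun n hn =>
      ⟨hn.1, hn.2.1, Nat.even_iff.mp hn.2.2⟩)
  · exact not_summable_aux _ 1 (fun n hn =>
      ⟨hn.1, hn.2.1, Nat.odd_iff.mp hn.2.2⟩)
end
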